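/- arXiv:1011.3554 — 15 statements merged into one kernel-verified Lean document; each statement's English description precedes it below -/
import Mathlib

section
/- Let f, f', g, g' : ℕ → ℝ be sequences of nonnegative real numbers, none of which is identically zero, such that [f] = [f'], [g] = [g'], and each of the complexity classes [f], [f'], [g], [g'] is translation invariant. Then the discrete convolution f*g is not identically zero and [f*g] = [f'*g']. -/
/-!
For nonnegative sequences, `SameClass` is `=Θ[atTop]`. Choose `N` with `f ≤ c f'` beyond `N` and
`s₀` with `f' s₀ > 0`, and split `(f * g)(n)` at `s = N`. The tail is at most `c (f' * g)(n)`. Each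
of the finitely many head terms `f s g(n - s)` is `O(g(n - s₀))` because translation invariance of
`[g]` iterates to any fixed shift, and `f' s₀ g(n - s₀) ≤ (f' * g)(n)`. Hence `[f * g] ≤ [f' * g]`;
applying this to each factor, in both directions, gives the claim.
-/

open Filter Finset

/-- The discrete convolution (Cauchy product) of two sequences. -/
def conv (f g : ℕ → ℝ) : ℕ → ℝ := fun n => ∑ s ∈ Finset.range (n + 1), f s * g (n - s)

/-- `[f] = [g]`: there are constants `c₁, c₂ > 0` with
`c₁ g(n) ≤ f(n) ≤ c₂ g(n)` for all but finitely many `n`. -/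
def SameClass (f g : ℕ → ℝ) : Prop :=
  ∃ c₁ c₂ : ℝ, 0 < c₁ ∧ 0 < c₂ ∧
    ∀ᶠ n in Filter.atTop, c₁ * g n ≤ f n ∧ f n ≤ c₂ * g n

/-- The complexity class `[f]` is translation invariant if `[n ↦ f(n+1)] = [f]`. -/
def TransInv (f : ℕ → ℝ) : Prop := SameClass (fun n => f (n + 1)) f

open Asymptotics

lemma conv_comm (f g : ℕ → ℝ) : conv f g = conv g f := by
  funext n
  simp only [conv, ← Finset.Nat.sum_antidiagonal_eq_sum_range_succ (fun i j => f i * g j),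
    ← Finset.Nat.sum_antidiagonal_eq_sum_range_succ (fun i j => g i * f j)]
  rw [← Finset.Nat.sum_antidiagonal_swap]
  simp only [Prod.fst_swap, Prod.snd_swap, mul_comm]

lemma conv_nonneg {f g : ℕ → ℝ} (hf : ∀ n, 0 ≤ f n) (hg : ∀ n, 0 ≤ g n) (n : ℕ) :
    0 ≤ conv f g n :=
  sum_nonneg fun s _ => mul_nonneg (hf s) (hg _)

lemma mul_le_conv {f g : ℕ → ℝ} (hf : ∀ n, 0 ≤ f n) (hg : ∀ n, 0 ≤ g n) {s n : ℕ}
    (hsn : s ≤ n) : f s * g (n - s) ≤ conv f g n :=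
  single_le_sum (f := fun s => f s * g (n - s)) (fun s _ => mul_nonneg (hf s) (hg _))
    (mem_range_succ_iff.mpr hsn)

lemma conv_add_pos {f g : ℕ → ℝ} (hf : ∀ n, 0 ≤ f n) (hg : ∀ n, 0 ≤ g n) {a b : ℕ}
    (ha : 0 < f a) (hb : 0 < g b) : 0 < conv f g (a + b) := by
  have hterm := mul_le_conv hf hg (Nat.le_add_right a b)
  rw [Nat.add_sub_cancel_left] at hterm
  exact (mul_pos ha hb).trans_le hterm

lemma SameClass.isTheta {f g : ℕ → ℝ} (h : SameClass f g) (hg : ∀ n, 0 ≤ g n) :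
    f =Θ[atTop] g := by
  obtain ⟨c₁, c₂, hc₁, -, hfg⟩ := h
  refine ⟨.of_bound c₂ ?_, .of_bound c₁⁻¹ ?_⟩ <;> filter_upwards [hfg] with n ⟨h₁, h₂⟩
  all_goals
    have hfn : 0 ≤ f n := (mul_nonneg hc₁.le (hg n)).trans h₁
    rw [Real.norm_of_nonneg hfn, Real.norm_of_nonneg (hg n)]
  · exact h₂
  · rwa [← div_eq_inv_mul, le_div_iff₀' hc₁]

lemma sameClass_of_isTheta {f g : ℕ → ℝ} (hf : ∀ n, 0 ≤ f n) (hg : ∀ n, 0 ≤ g n)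
    (h : f =Θ[atTop] g) : SameClass f g := by
  obtain ⟨c₂, hc₂, hfg⟩ := h.1.exists_pos
  obtain ⟨c₁, hc₁, hgf⟩ := h.2.exists_pos
  refine ⟨c₁⁻¹, c₂, inv_pos.mpr hc₁, hc₂, ?_⟩
  filter_upwards [hfg.bound, hgf.bound] with n h₂ h₁
  rw [Real.norm_of_nonneg (hf n), Real.norm_of_nonneg (hg n)] at h₁ h₂
  exact ⟨by rwa [← div_eq_inv_mul, div_le_iff₀' hc₁], h₂⟩

namespace TransInv

variable {g : ℕ → ℝ}

lemma isTheta_add (hg : ∀ n, 0 ≤ g n) (htg : TransInv g) (k : ℕ) :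
    (fun n => g (n + k)) =Θ[atTop] g := by
  induction k with
  | zero => exact isTheta_rfl
  | succ k ih =>
    have hstep := htg.isTheta hg
    exact .trans ⟨hstep.1.comp_tendsto (tendsto_add_atTop_nat k),
      hstep.2.comp_tendsto (tendsto_add_atTop_nat k)⟩ ih

lemma isTheta_sub_of_le (hg : ∀ n, 0 ≤ g n) (htg : TransInv g) {s t : ℕ} (hst : s ≤ t) :
    (fun n => g (n - s)) =Θ[atTop] (fun n => g (n - t)) := by
  have h := isTheta_add hg htg (t - s)
  refine EventuallyEq.trans_isTheta ?_
    ⟨h.1.comp_tendsto (tendsto_sub_atTop_nat t), h.2.comp_tendsto (tendsto_sub_atTop_nat t)⟩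
  filter_upwards [eventually_ge_atTop t] with n hn
  simp only [Function.comp_apply]
  congr 1
  omega

lemma isTheta_sub (hg : ∀ n, 0 ≤ g n) (htg : TransInv g) (s t : ℕ) :
    (fun n => g (n - s)) =Θ[atTop] (fun n => g (n - t)) :=
  (isTheta_sub_of_le hg htg (le_max_left s t)).trans
    (isTheta_sub_of_le hg htg (le_max_right s t)).symm

end TransInv

lemma conv_le_sum_range_add {f f' g : ℕ → ℝ} (hf : ∀ n, 0 ≤ f n) (hf' : ∀ n, 0 ≤ f' n)
    (hg : ∀ n, 0 ≤ g n) {c : ℝ} (hc : 0 ≤ c) {N : ℕ} (hff' : ∀ s, N ≤ s → f s ≤ c * f' s)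
    (n : ℕ) :
    conv f g n ≤ ∑ s ∈ range N, f s * g (n - s) + c * conv f' g n := by
  have hterm : ∀ s ∈ range (n + 1),
      f s * g (n - s) ≤ (if s < N then f s * g (n - s) else 0) + c * (f' s * g (n - s)) := by
    intro s _
    split_ifs with hs
    · exact le_add_of_nonneg_right (mul_nonneg hc (mul_nonneg (hf' s) (hg _)))
    · rw [zero_add, ← mul_assoc]
      exact mul_le_mul_of_nonneg_right (hff' s (not_lt.mp hs)) (hg _)
  calc conv f g n
      ≤ ∑ s ∈ range (n + 1), ((if s < N then f s * g (n - s) else 0) + c * (f' s * g (n - s))) :=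
        sum_le_sum hterm
    _ = ∑ s ∈ (range (n + 1)).filter (· < N), f s * g (n - s) + c * conv f' g n := by
        rw [sum_add_distrib, sum_ite, sum_const_zero, add_zero,
          ← mul_sum]
        rfl
    _ ≤ ∑ s ∈ range N, f s * g (n - s) + c * conv f' g n := by
        gcongr
        · exact fun s _ _ => mul_nonneg (hf s) (hg _)
        · intro s hs
          simp only [mem_filter] at hs
          exact mem_range.mpr hs.2

lemma isBigO_conv_of_ne_zero {f g : ℕ → ℝ} (hf : ∀ n, 0 ≤ f n) (hg : ∀ n, 0 ≤ g n) {s : ℕ}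
    (hs : f s ≠ 0) : (fun n => g (n - s)) =O[atTop] conv f g := by
  have hfs : 0 < f s := (hf s).lt_of_ne' hs
  refine .of_bound (f s)⁻¹ ?_
  filter_upwards [eventually_ge_atTop s] with n hn
  rw [Real.norm_of_nonneg (hg _), Real.norm_of_nonneg (conv_nonneg hf hg n),
    ← div_eq_inv_mul, le_div_iff₀' hfs]
  exact mul_le_conv hf hg hn

lemma conv_isBigO_conv_left {f f' g : ℕ → ℝ} (hf : ∀ n, 0 ≤ f n) (hf' : ∀ n, 0 ≤ f' n)
    (hg : ∀ n, 0 ≤ g n) (hf'z : ∃ s, f' s ≠ 0) (hff' : f =O[atTop] f') (htg : TransInv g) :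
    conv f g =O[atTop] conv f' g := by
  obtain ⟨s₀, hs₀⟩ := hf'z
  obtain ⟨c, hc, hcf⟩ := hff'.exists_pos
  obtain ⟨N, hN⟩ := eventually_atTop.mp hcf.bound
  have hbound : ∀ s, N ≤ s → f s ≤ c * f' s := fun s hs => by
    simpa only [Real.norm_of_nonneg (hf s), Real.norm_of_nonneg (hf' s)] using hN s hs
  have hhead : (fun n => ∑ s ∈ range N, f s * g (n - s)) =O[atTop] conv f' g :=
    IsBigO.fun_sum fun s _ => ((htg.isTheta_sub hg s s₀).1.const_mul_left (f s)).trans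
      (isBigO_conv_of_ne_zero hf' hg hs₀)
  refine .trans (isBigO_of_le _ fun n => ?_) (hhead.add ((isBigO_refl _ _).const_mul_left c))
  rw [Real.norm_of_nonneg (conv_nonneg hf hg n)]
  exact (conv_le_sum_range_add hf hf' hg hc.le hbound n).trans (Real.le_norm_self _)

lemma conv_isBigO_conv_right {f g g' : ℕ → ℝ} (hf : ∀ n, 0 ≤ f n) (hg : ∀ n, 0 ≤ g n)
    (hg' : ∀ n, 0 ≤ g' n) (hg'z : ∃ s, g' s ≠ 0) (hgg' : g =O[atTop] g') (htf : TransInv f) :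
    conv f g =O[atTop] conv f g' := by
  simpa only [conv_comm f] using conv_isBigO_conv_left hg hg' hf hg'z hgg' htf

theorem conv_not_zero_and_sameClass_general
    (f f' g g' : ℕ → ℝ)
    (hf : ∀ n, 0 ≤ f n) (hf' : ∀ n, 0 ≤ f' n)
    (hg : ∀ n, 0 ≤ g n) (hg' : ∀ n, 0 ≤ g' n)
    (hfz : ¬ ∀ n, f n = 0) (hf'z : ¬ ∀ n, f' n = 0)
    (hgz : ¬ ∀ n, g n = 0) (hg'z : ¬ ∀ n, g' n = 0)
    (hff' : SameClass f f') (hgg' : SameClass g g')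
    (htf' : TransInv f') (htg : TransInv g) :
    (¬ ∀ n, conv f g n = 0) ∧ SameClass (conv f g) (conv f' g') := by
  obtain ⟨a, ha⟩ := not_forall.mp hfz
  obtain ⟨b, hb⟩ := not_forall.mp hgz
  have hff'Θ := hff'.isTheta hf'
  have hgg'Θ := hgg'.isTheta hg'
  refine ⟨fun hzero => (conv_add_pos hf hg ((hf a).lt_of_ne' ha) ((hg b).lt_of_ne' hb)).ne'
    (hzero (a + b)), sameClass_of_isTheta (conv_nonneg hf hg) (conv_nonneg hf' hg') ⟨?_, ?_⟩⟩
  · exact (conv_isBigO_conv_left hf hf' hg (not_forall.mp hf'z) hff'Θ.1 htg).trans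
      (conv_isBigO_conv_right hf' hg hg' (not_forall.mp hg'z) hgg'Θ.1 htf')
  · exact (conv_isBigO_conv_right hf' hg' hg ⟨b, hb⟩ hgg'Θ.2 htf').trans
      (conv_isBigO_conv_left hf' hf hg ⟨a, ha⟩ hff'Θ.2 htg)

theorem conv_not_zero_and_sameClass
    (f f' g g' : ℕ → ℝ)
    (hf : ∀ n, 0 ≤ f n) (hf' : ∀ n, 0 ≤ f' n)
    (hg : ∀ n, 0 ≤ g n) (hg' : ∀ n, 0 ≤ g' n)
    (hfz : ¬ ∀ n, f n = 0) (hf'z : ¬ ∀ n, f' n = 0)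
    (hgz : ¬ ∀ n, g n = 0) (hg'z : ¬ ∀ n, g' n = 0)
    (hff' : SameClass f f') (hgg' : SameClass g g')
    (htf : TransInv f) (htf' : TransInv f') (htg : TransInv g) (htg' : TransInv g') :
    (¬ ∀ n, conv f g n = 0) ∧ SameClass (conv f g) (conv f' g') :=
  conv_not_zero_and_sameClass_general f f' g g' hf hf' hg hg' hfz hf'z hgz hg'z hff' hgg' htf' htg
end

section
/- Let a, b be real numbers with 0 < a < b and let r, ℓ be natural numbers. Then the discrete convolution of the sequences n ↦ a^n n^r and n ↦ b^n n^ℓ has the same complexity class as n ↦ b^n n^ℓ; explicitly, there exist real constants c₁, c₂ > 0 such that for all but finitely many n ∈ ℕ, c₁ b^n n^ℓ ≤ Σ_{s=0}^n a^s s^r b^{n−s} (n−s)^ℓ ≤ c₂ b^n n^ℓ. -/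
/-!
Writing `q = a / b < 1`, the `s`-th term of the convolution is at most
`s ^ r * q ^ s * b ^ n * n ^ ℓ`, so the sum is bounded by `(∑' s, s ^ r * q ^ s) * b ^ n * n ^ ℓ`,
a convergent arithmetico-geometric series. Conversely, the single term `s = 1` equals
`a * b ^ (n - 1) * (n - 1) ^ ℓ`, which is at least `a / (b * 2 ^ ℓ) * b ^ n * n ^ ℓ` once `n ≥ 2`.
-/

open Filter Finset

section ConvolutionBounds

variable {a b : ℝ}

lemma conv_term_le_geometric_mul (ha : 0 ≤ a) (hb : 0 < b) (r ℓ : ℕ) {n s : ℕ}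
    (hs : s ≤ n) :
    a ^ s * (s : ℝ) ^ r * b ^ (n - s) * ((n - s : ℕ) : ℝ) ^ ℓ ≤
      (s : ℝ) ^ r * (a / b) ^ s * (b ^ n * (n : ℝ) ^ ℓ) := by
  have hsplit : a ^ s * b ^ (n - s) = (a / b) ^ s * b ^ n := by
    rw [div_pow, ← Nat.add_sub_cancel' hs, pow_add, Nat.add_sub_cancel_left]
    field_simp
  have hpow : ((n - s : ℕ) : ℝ) ^ ℓ ≤ (n : ℝ) ^ ℓ := by gcongr; exact Nat.sub_le n s
  calc a ^ s * (s : ℝ) ^ r * b ^ (n - s) * ((n - s : ℕ) : ℝ) ^ ℓ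
      ≤ a ^ s * (s : ℝ) ^ r * b ^ (n - s) * (n : ℝ) ^ ℓ := by gcongr
    _ = (s : ℝ) ^ r * (a ^ s * b ^ (n - s)) * (n : ℝ) ^ ℓ := by ring
    _ = (s : ℝ) ^ r * (a / b) ^ s * (b ^ n * (n : ℝ) ^ ℓ) := by rw [hsplit]; ring

lemma summable_pow_mul_div_pow (ha : 0 ≤ a) (hab : a < b) (r : ℕ) :
    Summable fun s : ℕ => (s : ℝ) ^ r * (a / b) ^ s := by
  have hb : 0 < b := ha.trans_lt hab
  apply summable_pow_mul_geometric_of_norm_lt_one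
  rw [Real.norm_of_nonneg (div_nonneg ha hb.le)]
  exact (div_lt_one hb).2 hab

lemma sum_conv_le_tsum_mul (ha : 0 ≤ a) (hab : a < b) (r ℓ n : ℕ) :
    ∑ s ∈ range (n + 1), a ^ s * (s : ℝ) ^ r * b ^ (n - s) * ((n - s : ℕ) : ℝ) ^ ℓ ≤
      (∑' s : ℕ, (s : ℝ) ^ r * (a / b) ^ s) * (b ^ n * (n : ℝ) ^ ℓ) := by
  have hb : 0 < b := ha.trans_lt hab
  calc ∑ s ∈ range (n + 1), a ^ s * (s : ℝ) ^ r * b ^ (n - s) * ((n - s : ℕ) : ℝ) ^ ℓ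
      ≤ ∑ s ∈ range (n + 1), (s : ℝ) ^ r * (a / b) ^ s * (b ^ n * (n : ℝ) ^ ℓ) :=
        sum_le_sum fun s hs =>
          conv_term_le_geometric_mul ha hb r ℓ (Nat.lt_succ_iff.1 (mem_range.1 hs))
    _ = (∑ s ∈ range (n + 1), (s : ℝ) ^ r * (a / b) ^ s) * (b ^ n * (n : ℝ) ^ ℓ) :=
        (sum_mul ..).symm
    _ ≤ (∑' s : ℕ, (s : ℝ) ^ r * (a / b) ^ s) * (b ^ n * (n : ℝ) ^ ℓ) := by
        gcongr
        exact (summable_pow_mul_div_pow ha hab r).sum_le_tsum _ fun s _ => by positivity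

lemma mul_le_sum_conv (ha : 0 ≤ a) (hb : 0 < b) (r ℓ : ℕ) {n : ℕ} (hn : 2 ≤ n) :
    a / (b * 2 ^ ℓ) * (b ^ n * (n : ℝ) ^ ℓ) ≤
      ∑ s ∈ range (n + 1), a ^ s * (s : ℝ) ^ r * b ^ (n - s) * ((n - s : ℕ) : ℝ) ^ ℓ := by
  obtain ⟨m, rfl⟩ : ∃ m, n = m + 1 := ⟨n - 1, by omega⟩
  have hm : ((m + 1 : ℕ) : ℝ) ≤ 2 * m := by
    have : (1 : ℝ) ≤ m := by exact_mod_cast (by omega : 1 ≤ m)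
    push_cast; linarith
  calc a / (b * 2 ^ ℓ) * (b ^ (m + 1) * ((m + 1 : ℕ) : ℝ) ^ ℓ)
      ≤ a / (b * 2 ^ ℓ) * (b ^ (m + 1) * (2 * m) ^ ℓ) := by gcongr
    _ = a ^ 1 * ((1 : ℕ) : ℝ) ^ r * b ^ (m + 1 - 1) * ((m + 1 - 1 : ℕ) : ℝ) ^ ℓ := by
        simp only [pow_one, Nat.cast_one, one_pow, mul_one, Nat.add_sub_cancel]
        field_simp
        ring
    _ ≤ _ := single_le_sum (f := fun s : ℕ => a ^ s * (s : ℝ) ^ r * b ^ (m + 1 - s) *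
        ((m + 1 - s : ℕ) : ℝ) ^ ℓ) (fun s _ => by positivity) (mem_range.2 (by omega))

end ConvolutionBounds

theorem conv_polyExp_lt (a b : ℝ) (ha : 0 < a) (hab : a < b) (r ℓ : ℕ) :
    ∃ c₁ c₂ : ℝ, 0 < c₁ ∧ 0 < c₂ ∧
      ∀ᶠ n : ℕ in Filter.atTop,
        c₁ * (b ^ n * (n : ℝ) ^ ℓ) ≤
            ∑ s ∈ Finset.range (n + 1),
              a ^ s * (s : ℝ) ^ r * b ^ (n - s) * ((n - s : ℕ) : ℝ) ^ ℓ ∧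
          ∑ s ∈ Finset.range (n + 1),
              a ^ s * (s : ℝ) ^ r * b ^ (n - s) * ((n - s : ℕ) : ℝ) ^ ℓ ≤
            c₂ * (b ^ n * (n : ℝ) ^ ℓ) := by
  have hb : 0 < b := ha.trans hab
  have htsum_pos : 0 < ∑' s : ℕ, (s : ℝ) ^ r * (a / b) ^ s :=
    (summable_pow_mul_div_pow ha.le hab r).tsum_pos (fun s => by positivity) 1
      (by simpa using div_pos ha hb)
  refine ⟨a / (b * 2 ^ ℓ), _, by positivity, htsum_pos, ?_⟩
  filter_upwards [eventually_ge_atTop 2] with n hn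
  exact ⟨mul_le_sum_conv ha.le hb r ℓ hn, sum_conv_le_tsum_mul ha.le hab r ℓ n⟩
end

section
/- Let b > 0 be a real number and let r, ℓ be natural numbers. Then the discrete convolution of the sequences n ↦ b^n n^r and n ↦ b^n n^ℓ has the same complexity class as n ↦ b^n n^{r+ℓ+1}; explicitly, there exist real constants c₁, c₂ > 0 such that for all but finitely many n ∈ ℕ, c₁ b^n n^{r+ℓ+1} ≤ Σ_{s=0}^n b^s s^r b^{n−s} (n−s)^ℓ ≤ c₂ b^n n^{r+ℓ+1}. -/
open Filter Finset

theorem conv_polyExp_eq (b : ℝ) (hb : 0 < b) (r ℓ : ℕ) :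
    ∃ c₁ c₂ : ℝ, 0 < c₁ ∧ 0 < c₂ ∧
      ∀ᶠ n : ℕ in Filter.atTop,
        c₁ * (b ^ n * (n : ℝ) ^ (r + ℓ + 1)) ≤
            ∑ s ∈ Finset.range (n + 1),
              b ^ s * (s : ℝ) ^ r * b ^ (n - s) * ((n - s : ℕ) : ℝ) ^ ℓ ∧
          ∑ s ∈ Finset.range (n + 1),
              b ^ s * (s : ℝ) ^ r * b ^ (n - s) * ((n - s : ℕ) : ℝ) ^ ℓ ≤
            c₂ * (b ^ n * (n : ℝ) ^ (r + ℓ + 1)) := by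
  refine ⟨1 / 6 ^ (r + ℓ + 1), 2, by positivity, by norm_num, ?_⟩
  filter_upwards [eventually_ge_atTop 6] with n hn
  have hb' : (0:ℝ) < b ^ n := pow_pos hb n
  have hsum : ∑ s ∈ Finset.range (n + 1),
      b ^ s * (s : ℝ) ^ r * b ^ (n - s) * ((n - s : ℕ) : ℝ) ^ ℓ
      = b ^ n * ∑ s ∈ Finset.range (n + 1), (s : ℝ) ^ r * ((n - s : ℕ) : ℝ) ^ ℓ := by
    rw [Finset.mul_sum]
    refine Finset.sum_congr rfl fun s hs => ?_
    have hsle : s ≤ n := Nat.lt_succ_iff.mp (Finset.mem_range.mp hs)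
    rw [show b ^ s * (s:ℝ)^r * b^(n-s) * ((n-s:ℕ):ℝ)^ℓ
        = (b^s * b^(n-s)) * ((s:ℝ)^r * ((n-s:ℕ):ℝ)^ℓ) by ring,
      ← pow_add, Nat.add_sub_cancel' hsle]
  rw [hsum]
  set S := ∑ s ∈ Finset.range (n + 1), (s : ℝ) ^ r * ((n - s : ℕ) : ℝ) ^ ℓ with hS
  have hnpos : (1:ℝ) ≤ (n:ℝ) := by
    exact_mod_cast Nat.le_of_lt (Nat.lt_of_lt_of_le (by norm_num) hn)
  constructor
  · -- lower bound
    set k := n / 3 with hk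
    have h2k : 2 * k ≤ n := by omega
    have h6k : n ≤ 6 * k := by omega
    have hsub : Finset.Icc k (2*k) ⊆ Finset.range (n+1) := by
      intro s hs
      rw [Finset.mem_range, Nat.lt_succ_iff]
      exact le_trans (Finset.mem_Icc.mp hs).2 h2k
    have hterm : ∀ s ∈ Finset.Icc k (2*k),
        (k:ℝ)^r * (k:ℝ)^ℓ ≤ (s : ℝ) ^ r * ((n - s : ℕ) : ℝ) ^ ℓ := by
      intro s hs
      rw [Finset.mem_Icc] at hs
      have h1 : (k:ℝ) ≤ (s:ℝ) := by exact_mod_cast hs.1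
      have h2 : (k:ℝ) ≤ ((n - s : ℕ) : ℝ) := by
        have : k ≤ n - s := by omega
        exact_mod_cast this
      have hk0 : (0:ℝ) ≤ (k:ℝ) := Nat.cast_nonneg k
      exact mul_le_mul (pow_le_pow_left₀ hk0 h1 r) (pow_le_pow_left₀ hk0 h2 ℓ)
        (by positivity) (by positivity)
    have hlow1 : (k:ℝ)^(r+ℓ+1) ≤ S := by
      have hcard : ((Finset.Icc k (2*k)).card : ℝ) * ((k:ℝ)^r * (k:ℝ)^ℓ) ≤
          ∑ s ∈ Finset.Icc k (2*k), (s : ℝ) ^ r * ((n - s : ℕ) : ℝ) ^ ℓ := by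
        simpa [nsmul_eq_mul] using Finset.card_nsmul_le_sum _ _ _ hterm
      have hsub2 : ∑ s ∈ Finset.Icc k (2*k), (s : ℝ) ^ r * ((n - s : ℕ) : ℝ) ^ ℓ ≤ S := by
        refine Finset.sum_le_sum_of_subset_of_nonneg hsub fun i _ _ => by positivity
      refine le_trans ?_ (le_trans hcard hsub2)
      rw [Nat.card_Icc]
      have : (k:ℝ) ≤ ((2*k + 1 - k : ℕ) : ℝ) := by
        have : k ≤ 2*k + 1 - k := by omega
        exact_mod_cast this
      calc (k:ℝ)^(r+ℓ+1) = (k:ℝ) * ((k:ℝ)^r * (k:ℝ)^ℓ) := by ring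
        _ ≤ ((2*k + 1 - k : ℕ) : ℝ) * ((k:ℝ)^r * (k:ℝ)^ℓ) := by
            exact mul_le_mul_of_nonneg_right this (by positivity)
    have hk6 : (n:ℝ) / 6 ≤ (k:ℝ) := by
      rw [div_le_iff₀ (by norm_num)]
      have : (n:ℝ) ≤ (6*k : ℕ) := by exact_mod_cast h6k
      push_cast at this
      linarith
    have hlow2 : ((n:ℝ)/6)^(r+ℓ+1) ≤ (k:ℝ)^(r+ℓ+1) :=
      pow_le_pow_left₀ (by positivity) hk6 _
    calc 1 / 6 ^ (r + ℓ + 1) * (b ^ n * (n : ℝ) ^ (r + ℓ + 1))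
        = b ^ n * ((n:ℝ)/6)^(r+ℓ+1) := by rw [div_pow]; ring
      _ ≤ b ^ n * S := by
          exact mul_le_mul_of_nonneg_left (le_trans hlow2 hlow1) hb'.le
  · -- upper bound
    have hterm : ∀ s ∈ Finset.range (n+1),
        (s : ℝ) ^ r * ((n - s : ℕ) : ℝ) ^ ℓ ≤ (n:ℝ)^r * (n:ℝ)^ℓ := by
      intro s hs
      have hsle : s ≤ n := Nat.lt_succ_iff.mp (Finset.mem_range.mp hs)
      have h1 : (s:ℝ) ≤ (n:ℝ) := by exact_mod_cast hsle
      have h2 : ((n - s : ℕ) : ℝ) ≤ (n:ℝ) := by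
        exact_mod_cast Nat.sub_le n s
      exact mul_le_mul (pow_le_pow_left₀ (Nat.cast_nonneg s) h1 r)
        (pow_le_pow_left₀ (Nat.cast_nonneg _) h2 ℓ) (by positivity) (by positivity)
    have hup : S ≤ ((n:ℝ)+1) * ((n:ℝ)^r * (n:ℝ)^ℓ) := by
      have := Finset.sum_le_card_nsmul _ _ _ hterm
      simpa [nsmul_eq_mul, Finset.card_range] using this
    have h1n : ((n:ℝ)+1) ≤ 2*(n:ℝ) := by linarith
    calc b ^ n * S ≤ b ^ n * (((n:ℝ)+1) * ((n:ℝ)^r * (n:ℝ)^ℓ)) :=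
          mul_le_mul_of_nonneg_left hup hb'.le
      _ ≤ b ^ n * (2*(n:ℝ) * ((n:ℝ)^r * (n:ℝ)^ℓ)) := by
          exact mul_le_mul_of_nonneg_left
            (mul_le_mul_of_nonneg_right h1n (by positivity)) hb'.le
      _ = 2 * (b ^ n * (n : ℝ) ^ (r + ℓ + 1)) := by ring
end

section
/- Let A be a square matrix with nonnegative real entries, indexed by a nonempty finite type, and suppose there exist a real number ρ > 0 and a vector x with all entries strictly positive such that A·x = ρ·x. Then there exist real constants c₁, c₂ > 0 such that for every n ∈ ℕ, c₁ ρ^n ≤ Σ_{i,j} (A^n)_{i j} ≤ c₂ ρ^n. -/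
open Finset

theorem sum_pow_entries_of_positive_eigenvector
    {ι : Type*} [Fintype ι] [DecidableEq ι] [Nonempty ι]
    (A : Matrix ι ι ℝ) (hA : ∀ i j, 0 ≤ A i j)
    (ρ : ℝ) (hρ : 0 < ρ) (x : ι → ℝ) (hx : ∀ i, 0 < x i)
    (heig : A.mulVec x = ρ • x) :
    ∃ c₁ c₂ : ℝ, 0 < c₁ ∧ 0 < c₂ ∧
      ∀ n : ℕ, c₁ * ρ ^ n ≤ ∑ i, ∑ j, (A ^ n) i j ∧
        ∑ i, ∑ j, (A ^ n) i j ≤ c₂ * ρ ^ n := by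
  have hpow : ∀ n : ℕ, (A ^ n).mulVec x = (ρ ^ n) • x := by
    intro n
    induction n with
    | zero => simp [Matrix.one_mulVec]
    | succ n ih =>
      rw [pow_succ', pow_succ', ← Matrix.mulVec_mulVec, ih, Matrix.mulVec_smul, heig,
        smul_smul, mul_comm]
  have hAn : ∀ n : ℕ, ∀ i j, 0 ≤ (A ^ n) i j := by
    intro n
    induction n with
    | zero =>
      intro i j
      by_cases h : i = j <;> simp [Matrix.one_apply, h]
    | succ n ih =>
      intro i j
      rw [pow_succ', Matrix.mul_apply]
      exact Finset.sum_nonneg fun k _ => mul_nonneg (hA i k) (ih k j)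
  -- min and max of x
  set m : ℝ := Finset.univ.inf' Finset.univ_nonempty x with hm
  set M : ℝ := Finset.univ.sup' Finset.univ_nonempty x with hM
  have hmx : ∀ i, m ≤ x i := fun i => Finset.inf'_le x (Finset.mem_univ i)
  have hxM : ∀ i, x i ≤ M := fun i => Finset.le_sup' x (Finset.mem_univ i)
  have hmpos : 0 < m := by
    obtain ⟨i, _, hi⟩ := Finset.exists_mem_eq_inf' Finset.univ_nonempty x
    rw [hm, hi]; exact hx i
  have hMpos : 0 < M := lt_of_lt_of_le hmpos ((hmx (Classical.arbitrary ι)).trans (hxM _))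
  set T : ℝ := ∑ i, x i with hT
  have hTpos : 0 < T := Finset.sum_pos (fun i _ => hx i) Finset.univ_nonempty
  refine ⟨T / M, T / m, div_pos hTpos hMpos, div_pos hTpos hmpos, ?_⟩
  intro n
  set S : ℝ := ∑ i, ∑ j, (A ^ n) i j with hS
  have key : ∀ i, ∑ j, (A ^ n) i j * x j = ρ ^ n * x i := by
    intro i
    have := congrFun (hpow n) i
    simpa [Matrix.mulVec, dotProduct, Pi.smul_apply, smul_eq_mul] using this
  have hlow : m * S ≤ ρ ^ n * T := by
    have : ∀ i, m * ∑ j, (A ^ n) i j ≤ ρ ^ n * x i := by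
      intro i
      rw [← key i, Finset.mul_sum]
      exact Finset.sum_le_sum fun j _ => by
        rw [mul_comm]
        exact mul_le_mul_of_nonneg_left (hmx j) (hAn n i j)
    calc m * S = ∑ i, m * ∑ j, (A ^ n) i j := by rw [hS, Finset.mul_sum]
      _ ≤ ∑ i, ρ ^ n * x i := Finset.sum_le_sum fun i _ => this i
      _ = ρ ^ n * T := by rw [hT, Finset.mul_sum]
  have hhigh : ρ ^ n * T ≤ M * S := by
    have : ∀ i, ρ ^ n * x i ≤ M * ∑ j, (A ^ n) i j := by
      intro i
      rw [← key i, Finset.mul_sum]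
      exact Finset.sum_le_sum fun j _ => by
        rw [mul_comm M]
        exact mul_le_mul_of_nonneg_left (hxM j) (hAn n i j)
    calc ρ ^ n * T = ∑ i, ρ ^ n * x i := by rw [hT, Finset.mul_sum]
      _ ≤ ∑ i, M * ∑ j, (A ^ n) i j := Finset.sum_le_sum fun i _ => this i
      _ = M * S := by rw [hS, Finset.mul_sum]
  constructor
  · rw [div_mul_eq_mul_div, div_le_iff₀ hMpos, mul_comm T (ρ ^ n), mul_comm S M]
    exact hhigh
  · rw [div_mul_eq_mul_div, le_div_iff₀ hmpos, mul_comm T (ρ ^ n), mul_comm S m]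
    exact hlow
end

section
/- Let A be an irreducible square matrix with nonnegative integer entries, indexed by a nonempty finite type, and let ρ be its spectral radius. Then there exist real constants c₁, c₂ > 0 such that for all n ∈ ℕ, c₁ ρ^n ≤ Σ_{i,j} (A^n)_{i j} ≤ c₂ ρ^n. (Interpreting A as the adjacency matrix of a strongly connected finite quiver, the number of paths of length n in the quiver grows as Θ(ρ^n).) -/
/-!
Write `B` for `A` viewed as a complex matrix, so that `ρ` is the spectral radius of `B`; norms are
`ℓ∞` operator norms. For the lower bound, `ρ ^ n` is at most the spectral radius of `B ^ n`, hence
at most `‖B ^ n‖`, which for a nonnegative matrix is at most the sum of its entries.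

For the upper bound, diagonal entries of powers are supermultiplicative: `(A ^ n)ᵢᵢ ^ k` counts only
some of the closed walks at `i` of length `n * k`, so `(A ^ n)ᵢᵢ ^ k ≤ ‖(B ^ n) ^ k‖`, and Gelfand's
formula gives `(A ^ n)ᵢᵢ ≤ ρ ^ n`. By irreducibility there are walks `i₀ → i` and `j → i₀` of
lengths `aᵢ` and `bⱼ`; prepending and appending them to walks `i → j` shows
`(A ^ n)ᵢⱼ ≤ (A ^ (aᵢ + n + bⱼ))ᵢ₀ᵢ₀ ≤ ρ ^ (aᵢ + bⱼ) * ρ ^ n`.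
-/

open Finset Filter
open scoped NNReal ENNReal

namespace spectrum

theorem spectralRadius_eq_ofReal_of_isGreatest {𝕜 A : Type*} [NormedField 𝕜] [Ring A]
    [Algebra 𝕜 A] {a : A} {ρ : ℝ} (h : IsGreatest ((‖·‖) '' spectrum 𝕜 a) ρ) :
    spectralRadius 𝕜 a = ENNReal.ofReal ρ := by
  obtain ⟨⟨z, hz, rfl⟩, hmax⟩ := h
  refine le_antisymm (iSup₂_le fun k hk => ?_) ?_
  · rw [← enorm_eq_nnnorm, ← ofReal_norm]
    exact ENNReal.ofReal_le_ofReal (hmax ⟨k, hk, rfl⟩)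
  · rw [ofReal_norm, enorm_eq_nnnorm]
    exact le_iSup₂ (f := fun k (_ : k ∈ spectrum 𝕜 a) => (‖k‖₊ : ℝ≥0∞)) z hz

theorem spectralRadius_pow {𝕜 A : Type*} [NormedField 𝕜] [IsAlgClosed 𝕜] [Ring A] [Algebra 𝕜 A]
    {a : A} {n : ℕ} (hn : 0 < n) : spectralRadius 𝕜 (a ^ n) = spectralRadius 𝕜 a ^ n := by
  refine le_antisymm ?_ (spectralRadius_pow_le a n hn.ne')
  rw [spectralRadius, map_pow_of_pos a hn]
  refine iSup₂_le ?_
  rintro _ ⟨z, hz, rfl⟩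
  rw [nnnorm_pow, ENNReal.coe_pow]
  exact pow_le_pow_left' (le_iSup₂ (f := fun k (_ : k ∈ spectrum 𝕜 a) => (‖k‖₊ : ℝ≥0∞)) z hz) n

variable {A : Type*} [NormedRing A] [NormedAlgebra ℂ A] [CompleteSpace A]

theorem le_spectralRadius_of_forall_pow_le {a : A} {x : ℝ≥0} (h : ∀ k : ℕ, x ^ k ≤ ‖a ^ k‖₊) :
    (x : ℝ≥0∞) ≤ spectralRadius ℂ a := by
  refine ge_of_tendsto (pow_nnnorm_pow_one_div_tendsto_nhds_spectralRadius a) ?_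
  filter_upwards [eventually_ne_atTop 0] with k hk
  calc (x : ℝ≥0∞) = ((x : ℝ≥0∞) ^ k) ^ (1 / k : ℝ) := by
        rw [one_div, ENNReal.pow_rpow_inv_natCast hk]
  _ ≤ (‖a ^ k‖₊ : ℝ≥0∞) ^ (1 / k : ℝ) := by gcongr; exact_mod_cast h k

end spectrum

namespace Matrix

variable {l m n : Type*} [Fintype m]

theorem mem_spectrum_iff_mem_roots_charpoly [DecidableEq m] {K : Type*} [Field K]
    {B : Matrix m m K} {z : K} : z ∈ spectrum K B ↔ z ∈ B.charpoly.roots := by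
  rw [mem_spectrum_iff_isRoot_charpoly, Polynomial.mem_roots B.charpoly_monic.ne_zero]

theorem apply_mul_apply_le_mul_apply (P : Matrix l m ℕ) (Q : Matrix m n ℕ) (i : l) (j : m)
    (k : n) : P i j * Q j k ≤ (P * Q) i k :=
  single_le_sum (f := fun j => P i j * Q j k) (fun _ _ => Nat.zero_le _) (mem_univ j)

section LinftyOp

attribute [local instance] Matrix.linftyOpSeminormedAddCommGroup

variable [Fintype n] {α : Type*} [SeminormedAddCommGroup α]

theorem linfty_opNNNorm_apply_le (M : Matrix m n α) (i : m) (j : n) : ‖M i j‖₊ ≤ ‖M‖₊ := by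
  rw [linfty_opNNNorm_def]
  exact (single_le_sum (fun _ _ => zero_le) (mem_univ j)).trans
    (Finset.le_sup (f := fun i => ∑ j, ‖M i j‖₊) (mem_univ i))

theorem linfty_opNNNorm_le_sum (M : Matrix m n α) : ‖M‖₊ ≤ ∑ i, ∑ j, ‖M i j‖₊ := by
  rw [linfty_opNNNorm_def]
  exact Finset.sup_le fun i _ => single_le_sum (f := fun i => ∑ j, ‖M i j‖₊) (fun _ _ => zero_le)
    (mem_univ i)

end LinftyOp

variable [DecidableEq m]

theorem apply_self_pow_le_pow_apply_self (M : Matrix m m ℕ) (i : m) (k : ℕ) :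
    M i i ^ k ≤ (M ^ k) i i := by
  induction k with
  | zero => simp
  | succ k ih =>
    rw [pow_succ, pow_succ]
    exact (Nat.mul_le_mul_right _ ih).trans (apply_mul_apply_le_mul_apply _ _ i i i)

theorem pow_apply_le_pow_add_apply_self (M : Matrix m m ℕ) {a b : ℕ} (n : ℕ) {i₀ i j : m}
    (ha : 0 < (M ^ a) i₀ i) (hb : 0 < (M ^ b) j i₀) :
    (M ^ n) i j ≤ (M ^ (a + n + b)) i₀ i₀ :=
  calc (M ^ n) i j ≤ (M ^ a) i₀ i * (M ^ n) i j * (M ^ b) j i₀ :=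
        Nat.le_mul_of_pos_right _ hb |>.trans' (Nat.le_mul_of_pos_left _ ha)
  _ ≤ (M ^ a * M ^ n) i₀ j * (M ^ b) j i₀ :=
        Nat.mul_le_mul_right _ (apply_mul_apply_le_mul_apply _ _ i₀ i j)
  _ ≤ (M ^ a * M ^ n * M ^ b) i₀ i₀ := apply_mul_apply_le_mul_apply _ _ i₀ j i₀
  _ = (M ^ (a + n + b)) i₀ i₀ := by rw [pow_add, pow_add]

attribute [local instance] Matrix.linftyOpNormedRing Matrix.linftyOpNormedAlgebra

theorem nnnorm_map_natCast_pow_apply (M : Matrix m m ℕ) (k : ℕ) (i j : m) :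
    ‖(M.map ((↑) : ℕ → ℂ) ^ k) i j‖₊ = (M ^ k) i j := by
  change ‖((Nat.castRingHom ℂ).mapMatrix M ^ k) i j‖₊ = _
  rw [← map_pow]
  simp

theorem spectralRadius_map_natCast_pow_le_sum [Nonempty m] (M : Matrix m m ℕ) (n : ℕ) :
    spectralRadius ℂ (M.map ((↑) : ℕ → ℂ)) ^ n ≤ ((∑ i, ∑ j, (M ^ n) i j : ℕ) : ℝ≥0∞) :=
  calc spectralRadius ℂ (M.map ((↑) : ℕ → ℂ)) ^ n
      ≤ spectralRadius ℂ (M.map ((↑) : ℕ → ℂ) ^ n) := spectrum.spectralRadius_pow_le' _ n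
  _ ≤ ‖M.map ((↑) : ℕ → ℂ) ^ n‖₊ := spectrum.spectralRadius_le_nnnorm _
  _ ≤ ((∑ i, ∑ j, ‖(M.map ((↑) : ℕ → ℂ) ^ n) i j‖₊ : ℝ≥0) : ℝ≥0∞) := by
        exact_mod_cast linfty_opNNNorm_le_sum _
  _ = ((∑ i, ∑ j, (M ^ n) i j : ℕ) : ℝ≥0∞) := by simp [nnnorm_map_natCast_pow_apply]

theorem pow_apply_self_le_spectralRadius_map_natCast_pow (M : Matrix m m ℕ) (n : ℕ) (i : m) :
    ((M ^ n) i i : ℝ≥0∞) ≤ spectralRadius ℂ (M.map ((↑) : ℕ → ℂ)) ^ n := by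
  rcases n.eq_zero_or_pos with rfl | hn
  · simp
  rw [← spectrum.spectralRadius_pow hn]
  have hpow (k : ℕ) : ((M ^ n) i i : ℝ≥0) ^ k ≤ ‖(M.map ((↑) : ℕ → ℂ) ^ n) ^ k‖₊ :=
    calc ((M ^ n) i i : ℝ≥0) ^ k ≤ (M ^ (n * k)) i i := by
          rw [pow_mul]; exact_mod_cast apply_self_pow_le_pow_apply_self _ i k
    _ = ‖(M.map ((↑) : ℕ → ℂ) ^ (n * k)) i i‖₊ := (nnnorm_map_natCast_pow_apply M _ i i).symm
    _ ≤ ‖(M.map ((↑) : ℕ → ℂ) ^ n) ^ k‖₊ := by rw [← pow_mul]; exact linfty_opNNNorm_apply_le _ i i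
  exact_mod_cast spectrum.le_spectralRadius_of_forall_pow_le hpow

end Matrix

theorem sum_pow_entries_irreducible_spectralRadius
    {ι : Type*} [Fintype ι] [DecidableEq ι] [Nonempty ι]
    (A : Matrix ι ι ℕ)
    (hirr : ∀ i j : ι, ∃ k : ℕ, 1 ≤ k ∧ 0 < (A ^ k) i j)
    (ρ : ℝ)
    (hρ : IsGreatest
      {x : ℝ | ∃ z ∈ (Matrix.charpoly (A.map (fun m => (m : ℂ)))).roots,
        ‖z‖ = x} ρ) :
    ∃ c₁ c₂ : ℝ, 0 < c₁ ∧ 0 < c₂ ∧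
      ∀ n : ℕ, c₁ * ρ ^ n ≤ ∑ i, ∑ j, (((A ^ n) i j : ℕ) : ℝ) ∧
        ∑ i, ∑ j, (((A ^ n) i j : ℕ) : ℝ) ≤ c₂ * ρ ^ n := by
  have hρ0 : 0 ≤ ρ := by
    obtain ⟨z, -, rfl⟩ := hρ.1
    exact norm_nonneg z
  have hsr : spectralRadius ℂ (A.map ((↑) : ℕ → ℂ)) = ENNReal.ofReal ρ := by
    refine spectrum.spectralRadius_eq_ofReal_of_isGreatest ?_
    simpa [Set.image, Matrix.mem_spectrum_iff_mem_roots_charpoly] using hρ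
  have hlow (n : ℕ) : ρ ^ n ≤ ∑ i, ∑ j, ((A ^ n) i j : ℝ) := by
    have h := A.spectralRadius_map_natCast_pow_le_sum n
    rw [hsr, ← ENNReal.ofReal_pow hρ0, ENNReal.ofReal_le_natCast] at h
    exact_mod_cast h
  have hdiag (n : ℕ) (i : ι) : ((A ^ n) i i : ℝ) ≤ ρ ^ n := by
    have h := A.pow_apply_self_le_spectralRadius_map_natCast_pow n i
    rw [hsr, ← ENNReal.ofReal_pow hρ0] at h
    simpa using ENNReal.toReal_le_of_le_ofReal (by positivity) h
  obtain ⟨i₀⟩ := ‹Nonempty ι›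
  choose a ha_pos ha using fun i => hirr i₀ i
  choose b _ hb using fun j => hirr j i₀
  have hentry (n : ℕ) (i j : ι) : ((A ^ n) i j : ℝ) ≤ ρ ^ (a i + b j) * ρ ^ n :=
    calc ((A ^ n) i j : ℝ) ≤ ((A ^ (a i + n + b j)) i₀ i₀ : ℝ) := by
          exact_mod_cast A.pow_apply_le_pow_add_apply_self n (ha i) (hb j)
    _ ≤ ρ ^ (a i + n + b j) := hdiag _ i₀
    _ = ρ ^ (a i + b j) * ρ ^ n := by ring
  have hρpos : 0 < ρ := by
    refine lt_of_pow_lt_pow_left₀ (a i₀) hρ0 ?_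
    rw [zero_pow (Nat.one_le_iff_ne_zero.mp (ha_pos i₀))]
    exact one_pos.trans_le ((Nat.one_le_cast.mpr (ha i₀)).trans (hdiag _ _))
  refine ⟨1, ∑ i, ∑ j, ρ ^ (a i + b j), one_pos, by positivity,
    fun n => ⟨by simpa using hlow n, ?_⟩⟩
  calc ∑ i, ∑ j, ((A ^ n) i j : ℝ) ≤ ∑ i, ∑ j, ρ ^ (a i + b j) * ρ ^ n := by
        gcongr with i _ j _; exact hentry n i j
  _ = (∑ i, ∑ j, ρ ^ (a i + b j)) * ρ ^ n := by simp only [sum_mul]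
end

section
/- Let A be a square matrix with integer entries indexed by a nonempty finite type, and let b be the spectral radius of A, i.e. the maximum of the moduli of the complex roots of the characteristic polynomial of A. Then b is a nonnegative real algebraic integer (integral over ℤ), and every complex root of the minimal polynomial of b over ℚ has modulus at most b. -/
/-!
Write `b = ‖λ‖` for an eigenvalue `λ` of `A`. Since `λ` and `conj λ` are algebraic integers,
so is `b ^ 2 = λ * conj λ`, hence so is `b`. A conjugate `w` of `b` over `ℚ` is `φ b` for some
`ℚ`-embedding `φ` of `ℚ(b, λ, conj λ)` into `ℂ`; then `w ^ 2 = φ λ * φ (conj λ)` is a product of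
two roots of the rational polynomial `charpoly A`, so `‖w‖ ^ 2 ≤ b ^ 2`.
-/

open Polynomial ComplexConjugate

theorem IntermediateField.aeval_algHom_eq_zero {K L M : Type*} [Field K] [Field L] [Field M]
    [Algebra K L] [Algebra K M] {E : IntermediateField K L} (φ : E →ₐ[K] M) {P : K[X]} {x : E}
    (hx : aeval (x : L) P = 0) : aeval (φ x) P = 0 := by
  rw [aeval_algHom_apply, ← map_zero φ]
  congr 1
  exact_mod_cast (aeval_coe _ x P).symm.trans hx

namespace Complex

variable {R : Type*} [CommRing R] [Algebra R ℝ] [Algebra R ℂ] [IsScalarTower R ℝ ℂ]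

theorem isIntegral_conj {z : ℂ} (hz : IsIntegral R z) : IsIntegral R (conj z) :=
  hz.map (conjAe.toAlgHom.restrictScalars R)

theorem isIntegral_norm {z : ℂ} (hz : IsIntegral R z) : IsIntegral R ‖z‖ := by
  have hsq : algebraMap ℝ ℂ (‖z‖ ^ 2) = z * conj z := by
    rw [mul_conj']; norm_cast
  have : IsIntegral R (algebraMap ℝ ℂ (‖z‖ ^ 2)) := hsq ▸ hz.mul (isIntegral_conj hz)
  exact .of_pow two_pos ((isIntegral_algebraMap_iff (algebraMap ℝ ℂ).injective).1 this)

theorem aeval_conj_eq_zero {P : R[X]} {z : ℂ} (hz : aeval z P = 0) : aeval (conj z) P = 0 := by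
  simpa [hz] using aeval_algHom_apply (conjAe.toAlgHom.restrictScalars R) z P

theorem norm_le_of_aeval_minpoly_norm {K : Type*} [Field K] [Algebra K ℝ] [Algebra K ℂ]
    [IsScalarTower K ℝ ℂ] {P : K[X]} (hP : P ≠ 0) {r : ℝ}
    (hr : ∀ x : ℂ, aeval x P = 0 → ‖x‖ ≤ r) {z : ℂ} (hz : aeval z P = 0) {w : ℂ}
    (hw : aeval w (minpoly K ‖z‖) = 0) : ‖w‖ ≤ r := by
  have hzK : IsIntegral K z := IsAlgebraic.isIntegral ⟨P, hP, hz⟩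
  set S : Set ℂ := {(‖z‖ : ℂ), z, conj z}
  have hS : ∀ s ∈ S, IsIntegral K s ∧ ((minpoly K s).map (algebraMap K ℂ)).Splits := by
    rintro s (rfl | rfl | rfl)
    · exact ⟨(isIntegral_norm hzK).algebraMap, IsAlgClosed.splits _⟩
    · exact ⟨hzK, IsAlgClosed.splits _⟩
    · exact ⟨isIntegral_conj hzK, IsAlgClosed.splits _⟩
  have hnorm : (‖z‖ : ℂ) ∈ IntermediateField.adjoin K S :=
    IntermediateField.subset_adjoin K S (by simp [S])
  have hz' : z ∈ IntermediateField.adjoin K S := IntermediateField.subset_adjoin K S (by simp [S])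
  have hconj : conj z ∈ IntermediateField.adjoin K S :=
    IntermediateField.subset_adjoin K S (by simp [S])
  have hw' : aeval w (minpoly K (‖z‖ : ℂ)) = 0 := by
    rwa [← coe_algebraMap, minpoly.algebraMap_eq (algebraMap ℝ ℂ).injective]
  obtain ⟨φ, hφ⟩ := IntermediateField.exists_algHom_adjoin_of_splits_of_aeval hS hnorm hw'
  have hφroot (x : IntermediateField.adjoin K S) (hx : aeval (x : ℂ) P = 0) : ‖φ x‖ ≤ r :=
    hr _ (IntermediateField.aeval_algHom_eq_zero φ hx)
  have hsq : w ^ 2 = φ ⟨z, hz'⟩ * φ ⟨conj z, hconj⟩ := by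
    rw [← hφ, ← map_mul, ← map_pow]
    congr 1
    ext
    push_cast
    rw [mul_conj']
  have hr0 : 0 ≤ r := (norm_nonneg z).trans (hr z hz)
  refine (pow_le_pow_iff_left₀ (norm_nonneg w) hr0 two_ne_zero).1 ?_
  calc ‖w‖ ^ 2 = ‖φ ⟨z, hz'⟩‖ * ‖φ ⟨conj z, hconj⟩‖ := by rw [← norm_pow, hsq, norm_mul]
    _ ≤ r * r := mul_le_mul (hφroot _ hz) (hφroot _ (aeval_conj_eq_zero hz)) (norm_nonneg _) hr0
    _ = r ^ 2 := (sq r).symm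

end Complex

theorem Matrix.mem_roots_charpoly_map_algebraMap_iff {ι R S : Type*} [Fintype ι] [DecidableEq ι]
    [CommRing R] [CommRing S] [IsDomain S] [Algebra R S] (A : Matrix ι ι R) {x : S} :
    x ∈ (A.map (algebraMap R S)).charpoly.roots ↔ aeval x A.charpoly = 0 := by
  rw [charpoly_map]
  exact mem_aroots'.trans (and_iff_right (A.charpoly_monic.map _).ne_zero)

theorem spectralRadius_int_matrix_condC_general
    {ι : Type*} [Fintype ι] [DecidableEq ι]
    (A : Matrix ι ι ℤ) (b : ℝ)
    (hb : IsGreatest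
      {x : ℝ | ∃ z ∈ (Matrix.charpoly (A.map (fun m => (m : ℂ)))).roots,
        ‖z‖ = x} b) :
    0 ≤ b ∧ IsIntegral ℤ b ∧
      ∀ z ∈ ((minpoly ℚ b).map (algebraMap ℚ ℂ)).roots, ‖z‖ ≤ b := by
  have hroots (x : ℂ) : x ∈ (A.map (fun m => (m : ℂ))).charpoly.roots ↔ aeval x A.charpoly = 0 :=
    A.mem_roots_charpoly_map_algebraMap_iff
  obtain ⟨z₀, hz₀, rfl⟩ := hb.1
  rw [hroots] at hz₀
  refine ⟨norm_nonneg z₀, Complex.isIntegral_norm ⟨A.charpoly, A.charpoly_monic, hz₀⟩,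
    fun w hw ↦ ?_⟩
  refine Complex.norm_le_of_aeval_minpoly_norm (A.charpoly_monic.map (algebraMap ℤ ℚ)).ne_zero
    (fun x hx ↦ hb.2 ⟨x, ?_, rfl⟩) ?_ (mem_aroots'.1 hw).2
  · rwa [hroots, ← aeval_map_algebraMap ℚ]
  · rwa [aeval_map_algebraMap]

theorem spectralRadius_int_matrix_condC
    {ι : Type*} [Fintype ι] [DecidableEq ι] [Nonempty ι]
    (A : Matrix ι ι ℤ) (b : ℝ)
    (hb : IsGreatest
      {x : ℝ | ∃ z ∈ (Matrix.charpoly (A.map (fun m => (m : ℂ)))).roots,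
        ‖z‖ = x} b) :
    0 ≤ b ∧ IsIntegral ℤ b ∧
      ∀ z ∈ ((minpoly ℚ b).map (algebraMap ℚ ℂ)).roots, ‖z‖ ≤ b :=
  spectralRadius_int_matrix_condC_general A b hb
end

section
/- If real numbers b and c each satisfy condition (c), then b + c satisfies condition (c). -/
/-!
Every conjugate of `b + c` is `σ b + σ c` for some embedding `σ` of `ℚ(b, c)` into `ℂ`, and
`σ b`, `σ c` are conjugates of `b`, `c`; so its modulus is at most `|σ b| + |σ c| ≤ b + c`.
-/

/-- Condition (c): `b` is a nonnegative real algebraic integer and every complex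
root of its minimal polynomial over `ℚ` has modulus at most `b`. -/
def CondC (b : ℝ) : Prop :=
  0 ≤ b ∧ IsIntegral ℤ b ∧
    ∀ z ∈ ((minpoly ℚ b).map (algebraMap ℚ ℂ)).roots, ‖z‖ ≤ b

open IntermediateField

theorem IsConjRoot.of_algHom_apply {K A B : Type*} [Field K] [DivisionRing A] [Ring B]
    [Nontrivial B] [Algebra K A] [Algebra K B] (f g : A →ₐ[K] B) (a : A) :
    IsConjRoot K (f a) (g a) :=
  (minpoly.algHom_eq f f.injective a).trans (minpoly.algHom_eq g g.injective a).symm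

theorem IsConjRoot.exists_add_eq {K L : Type*} [Field K] [Field L] [IsAlgClosed L]
    [Algebra K L] {x y z : L} (hx : IsIntegral K x) (hy : IsIntegral K y)
    (hz : IsConjRoot K (x + y) z) :
    ∃ x' y', IsConjRoot K x x' ∧ IsConjRoot K y y' ∧ z = x' + y' := by
  set E := K⟮x, y⟯
  have hxE : x ∈ E := subset_adjoin K _ (by simp)
  have hyE : y ∈ E := subset_adjoin K _ (by simp)
  obtain ⟨φ, hφ⟩ := exists_algHom_adjoin_of_splits_of_aeval (S := {x, y})
    (fun s hs ↦ ⟨by rcases hs with rfl | rfl <;> assumption, IsAlgClosed.splits _⟩)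
    (add_mem hxE hyE) hz.aeval_eq_zero
  refine ⟨φ ⟨x, hxE⟩, φ ⟨y, hyE⟩, of_algHom_apply E.val φ ⟨x, hxE⟩,
    of_algHom_apply E.val φ ⟨y, hyE⟩, ?_⟩
  rw [← hφ, ← map_add]
  rfl

theorem isConjRoot_ofReal_iff {x : ℝ} (hx : IsIntegral ℚ x) {w : ℂ} :
    IsConjRoot ℚ (x : ℂ) w ↔ w ∈ (minpoly ℚ x).aroots ℂ := by
  have h := isConjRoot_iff_mem_minpoly_aroots (x := algebraMap ℝ ℂ x) (y := w) hx.algebraMap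
  rwa [minpoly.algebraMap_eq (algebraMap ℝ ℂ).injective x] at h

theorem CondC.norm_le_of_isConjRoot {b : ℝ} (hb : CondC b) {w : ℂ}
    (hw : IsConjRoot ℚ (b : ℂ) w) : ‖w‖ ≤ b :=
  hb.2.2 w ((isConjRoot_ofReal_iff hb.2.1.tower_top).mp hw)

theorem condC_add (b c : ℝ) (hb : CondC b) (hc : CondC c) : CondC (b + c) := by
  have hbc : IsIntegral ℤ (b + c) := hb.2.1.add hc.2.1
  refine ⟨add_nonneg hb.1 hc.1, hbc, fun z hz ↦ ?_⟩
  have hz' : IsConjRoot ℚ ((b : ℂ) + c) z := by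
    exact_mod_cast (isConjRoot_ofReal_iff hbc.tower_top).mpr hz
  obtain ⟨u, v, hu, hv, rfl⟩ :=
    hz'.exists_add_eq hb.2.1.tower_top.algebraMap hc.2.1.tower_top.algebraMap
  calc ‖u + v‖ ≤ ‖u‖ + ‖v‖ := norm_add_le u v
    _ ≤ b + c := add_le_add (hb.norm_le_of_isConjRoot hu) (hc.norm_le_of_isConjRoot hv)
end

section
/- If real numbers b and c each satisfy condition (c), then the product b·c satisfies condition (c). -/
/-!
Every conjugate of `b * c` is a product of a conjugate of `b` and a conjugate of `c`:
a `ℚ`-embedding of `ℚ(b * c)` into `ℂ` extends to `ℚ(b, c)`, and the extension sends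
`b` and `c` to conjugates of theirs. Hence each conjugate of `b * c` has modulus at most
`b * c`.
-/

open Polynomial IntermediateField

section

variable {K L F : Type*} [Field K] [Field L] [Field F] [Algebra K L] [Algebra K F]

theorem IntermediateField.algHom_apply_mem_aroots_minpoly {E : IntermediateField K L}
    (ψ : E →ₐ[K] F) {w : E} (hw : IsIntegral K (w : L)) :
    ψ w ∈ (minpoly K (w : L)).aroots F := by
  rw [mem_aroots, ← minpoly_eq, aeval_algHom_apply, minpoly.aeval, map_zero]
  exact ⟨minpoly.ne_zero (isIntegral_iff.mpr hw), rfl⟩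

theorem exists_mem_aroots_mul_eq_of_mem_aroots_minpoly_mul [IsAlgClosed F] {x y : L}
    (hx : IsIntegral K x) (hy : IsIntegral K y) {z : F}
    (hz : z ∈ (minpoly K (x * y)).aroots F) :
    ∃ u ∈ (minpoly K x).aroots F, ∃ v ∈ (minpoly K y).aroots F, z = u * v := by
  have hx_mem : x ∈ K⟮x, y⟯ := mem_adjoin_pair_left K x y
  have hy_mem : y ∈ K⟮x, y⟯ := mem_adjoin_pair_right K x y
  have hsplits : ∀ s ∈ ({x, y} : Set L),
      IsIntegral K s ∧ ((minpoly K s).map (algebraMap K F)).Splits := by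
    rintro s (rfl | rfl)
    exacts [⟨hx, IsAlgClosed.splits _⟩, ⟨hy, IsAlgClosed.splits _⟩]
  obtain ⟨ψ, hψ⟩ := exists_algHom_adjoin_of_splits_of_aeval hsplits (mul_mem hx_mem hy_mem)
    (mem_aroots'.mp hz).2
  refine ⟨ψ ⟨x, hx_mem⟩, algHom_apply_mem_aroots_minpoly ψ hx,
    ψ ⟨y, hy_mem⟩, algHom_apply_mem_aroots_minpoly ψ hy, ?_⟩
  rw [← hψ, ← map_mul]
  rfl

end

theorem condC_mul (b c : ℝ) (hb : CondC b) (hc : CondC c) : CondC (b * c) := by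
  obtain ⟨hb0, hbi, hbr⟩ := hb
  obtain ⟨hc0, hci, hcr⟩ := hc
  refine ⟨mul_nonneg hb0 hc0, hbi.mul hci, fun z hz ↦ ?_⟩
  obtain ⟨u, hu, v, hv, rfl⟩ :=
    exists_mem_aroots_mul_eq_of_mem_aroots_minpoly_mul hbi.tower_top hci.tower_top hz
  rw [norm_mul]
  exact mul_le_mul (hbr u hu) (hcr v hv) (norm_nonneg v) hb0
end

section
/- If a real number b satisfies condition (c) and ℓ ≥ 1 is a natural number, then the nonnegative real ℓ-th root b^{1/ℓ} of b satisfies condition (c). -/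
/-! With `c = b ^ (1 / ℓ)` we have `c ^ ℓ = b`, so `c` is integral because `b` is. If `z` is a
conjugate of `c`, then `z ^ ℓ` is a conjugate of `b = c ^ ℓ`, since the minimal polynomial of `c`
divides `P(X ^ ℓ)` for `P` the minimal polynomial of `b`. Hence `‖z‖ ^ ℓ ≤ b = c ^ ℓ`. -/

open Polynomial

theorem pow_mem_roots_map_minpoly_pow {K A L : Type*} [Field K] [Ring A] [Algebra K A]
    [CommRing L] [IsDomain L] [Algebra K L] {x : A} {z : L} (n : ℕ)
    (hz : z ∈ ((minpoly K x).map (algebraMap K L)).roots) :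
    z ^ n ∈ ((minpoly K (x ^ n)).map (algebraMap K L)).roots := by
  have hx : minpoly K x ≠ 0 := by rintro h; simp [h] at hz
  have hxn : minpoly K (x ^ n) ≠ 0 :=
    minpoly.ne_zero_iff.mpr ((minpoly.ne_zero_iff.mp hx).pow n)
  have inj := (algebraMap K L).injective
  rw [mem_roots_map_of_injective inj hx] at hz
  rw [mem_roots_map_of_injective inj hxn]
  obtain ⟨q, hq⟩ := minpoly.dvd K x (p := (minpoly K (x ^ n)).comp (X ^ n)) (by simp [aeval_comp])
  simpa [eval₂_comp, hz] using congrArg (eval₂ (algebraMap K L) z) hq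

theorem condC_root (b : ℝ) (hb : CondC b) (ℓ : ℕ) (hℓ : 1 ≤ ℓ) :
    CondC (b ^ (1 / (ℓ : ℝ))) := by
  obtain ⟨hb0, hbi, hroots⟩ := hb
  have hℓ0 : ℓ ≠ 0 := Nat.one_le_iff_ne_zero.mp hℓ
  have hcℓ : (b ^ (1 / (ℓ : ℝ))) ^ ℓ = b := by rw [one_div, Real.rpow_inv_natCast_pow hb0 hℓ0]
  set c := b ^ (1 / (ℓ : ℝ))
  have hc0 : 0 ≤ c := Real.rpow_nonneg hb0 _
  refine ⟨hc0, IsIntegral.of_pow hℓ (hcℓ ▸ hbi), fun z hz => ?_⟩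
  have hzℓ : ‖z‖ ^ ℓ ≤ c ^ ℓ := by
    rw [← norm_pow, hcℓ]
    exact hroots _ (hcℓ ▸ pow_mem_roots_map_minpoly_pow ℓ hz)
  exact le_of_pow_le_pow_left₀ hℓ0 hc0 hzℓ
end

section
/- If a real number b satisfies condition (c), then either b = 0 or b ≥ 1. -/
/-!
The constant coefficient of the minimal polynomial of a nonzero algebraic integer `b` is a
nonzero integer, so it has absolute value at least `1`. Up to sign it is the product of the
`n ≥ 1` conjugates of `b`; if they all have modulus at most `b`, then `1 ≤ b ^ n`, so `1 ≤ b`.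
-/

open Polynomial

theorem one_le_abs_coeff_zero_minpoly_rat {L : Type*} [Field L] [CharZero L] {x : L}
    (hint : IsIntegral ℤ x) (hx : x ≠ 0) : 1 ≤ |(minpoly ℚ x).coeff 0| := by
  have hcoeff : (minpoly ℚ x).coeff 0 = (minpoly ℤ x).coeff 0 := by
    rw [minpoly.isIntegrallyClosed_eq_field_fractions' ℚ hint, coeff_map, eq_intCast]
  have hne : (minpoly ℤ x).coeff 0 ≠ 0 := by
    have := minpoly.coeff_zero_ne_zero (A := ℚ) hint.tower_top hx
    rwa [hcoeff, Int.cast_ne_zero] at this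
  rw [hcoeff]
  exact_mod_cast Int.one_le_abs hne

theorem condC_zero_or_one_le (b : ℝ) (hb : CondC b) : b = 0 ∨ 1 ≤ b := by
  obtain ⟨hb0, hint, hroots⟩ := hb
  refine or_iff_not_imp_left.mpr fun hne ↦ ?_
  have hintQ : IsIntegral ℚ b := hint.tower_top
  have hlower : 1 ≤ ‖((minpoly ℚ b).map (algebraMap ℚ ℂ)).coeff 0‖ := by
    rw [coeff_map, eq_ratCast, Complex.norm_ratCast]
    exact_mod_cast one_le_abs_coeff_zero_minpoly_rat hint hne
  have hupper :
      ‖((minpoly ℚ b).map (algebraMap ℚ ℂ)).coeff 0‖ ≤ b ^ (minpoly ℚ b).natDegree := by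
    simpa using coeff_le_of_roots_le 0 (minpoly.monic hintQ) (IsAlgClosed.splits _) hroots
  exact (one_le_pow_iff_of_nonneg hb0 (minpoly.natDegree_pos hintQ).ne').mp (hlower.trans hupper)
end

section
/- The set of real numbers satisfying condition (c) is dense in the interval [1, ∞); that is, for every real x ≥ 1 and every ε > 0 there exists a real b with |b − x| < ε such that b is a nonnegative algebraic integer and every complex root of the minimal polynomial of b over ℚ has modulus at most b. -/
/-!
An `n`-th root `b = m ^ (1/n)` of a natural number `m` satisfies (c): it is a root of
`X ^ n - m`, and so is each of its conjugates, which therefore all have modulus exactly `b`.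
Such roots are dense in `[1, ∞)`: once `n ε > 1` we have `(x + ε) ^ n ≥ x ^ n + n ε > ⌈x ^ n⌉`,
so `⌈x ^ n⌉ ^ (1/n)` lies in `[x, x + ε)`.
-/

open Polynomial

lemma pow_add_nat_mul_le_add_pow {x ε : ℝ} (hx : 1 ≤ x) (hε : 0 ≤ ε) :
    ∀ n : ℕ, x ^ n + n * ε ≤ (x + ε) ^ n
  | 0 => by simp
  | n + 1 => by
    have ih := pow_add_nat_mul_le_add_pow hx hε n
    have hxn : 1 ≤ x ^ n := one_le_pow₀ hx
    calc x ^ (n + 1) + (n + 1 : ℕ) * ε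
        ≤ (x ^ n + n * ε) * (x + ε) := by
          have hnε : 0 ≤ n * ε := by positivity
          rw [pow_succ]
          push_cast
          linarith [mul_le_mul_of_nonneg_right hxn hε, mul_le_mul_of_nonneg_left hx hnε,
            mul_nonneg hnε hε]
      _ ≤ (x + ε) ^ n * (x + ε) := by gcongr
      _ = (x + ε) ^ (n + 1) := (pow_succ _ _).symm

lemma exists_pow_add_one_lt_add_pow {x ε : ℝ} (hx : 1 ≤ x) (hε : 0 < ε) :
    ∃ n : ℕ, n ≠ 0 ∧ x ^ n + 1 < (x + ε) ^ n := by
  obtain ⟨n, hn⟩ := exists_nat_gt ε⁻¹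
  have hnε : 1 < n * ε := by rwa [← inv_lt_iff_one_lt_mul₀ hε]
  refine ⟨n, ?_, by linarith [pow_add_nat_mul_le_add_pow hx hε.le n]⟩
  rintro rfl
  norm_num at hnε

lemma exists_pow_eq_natCast_mem_Ico {x ε : ℝ} (hx : 1 ≤ x) (hε : 0 < ε) :
    ∃ b : ℝ, 0 ≤ b ∧ b ∈ Set.Ico x (x + ε) ∧ ∃ n : ℕ, n ≠ 0 ∧ ∃ m : ℕ, b ^ n = m := by
  obtain ⟨n, hn, hgap⟩ := exists_pow_add_one_lt_add_pow hx hε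
  set m := ⌈x ^ n⌉₊
  have hb0 : 0 ≤ (m : ℝ) ^ (n⁻¹ : ℝ) := Real.rpow_nonneg m.cast_nonneg _
  have hbm : ((m : ℝ) ^ (n⁻¹ : ℝ)) ^ n = m := Real.rpow_inv_natCast_pow m.cast_nonneg hn
  refine ⟨(m : ℝ) ^ (n⁻¹ : ℝ), hb0, ⟨?_, ?_⟩, n, hn, m, hbm⟩
  · refine le_of_pow_le_pow_left₀ hn hb0 ?_
    rw [hbm]
    exact Nat.le_ceil _
  · refine lt_of_pow_lt_pow_left₀ n (by linarith) ?_
    rw [hbm]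
    linarith [Nat.ceil_lt_add_one (zero_le_one.trans (one_le_pow₀ hx : 1 ≤ x ^ n))]

lemma norm_eq_of_mem_roots_minpoly {b : ℝ} (hb : 0 ≤ b) {n m : ℕ} (hn : n ≠ 0) (hbm : b ^ n = m)
    {z : ℂ} (hz : z ∈ ((minpoly ℚ b).map (algebraMap ℚ ℂ)).roots) : ‖z‖ = b := by
  have hdvd : minpoly ℚ b ∣ X ^ n - C (m : ℚ) := minpoly.dvd ℚ b (by simp [hbm])
  have hzn : z ^ n = m := by
    have := eval_eq_zero_of_dvd_of_eval_eq_zero (Polynomial.map_dvd (algebraMap ℚ ℂ) hdvd)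
      (isRoot_of_mem_roots hz)
    simpa [sub_eq_zero] using this
  refine (pow_left_inj₀ (norm_nonneg z) hb hn).mp ?_
  rw [← norm_pow, hzn, hbm, Complex.norm_natCast]

lemma condC_of_pow_eq_natCast {b : ℝ} (hb : 0 ≤ b) {n m : ℕ} (hn : n ≠ 0) (hbm : b ^ n = m) :
    CondC b :=
  ⟨hb, ⟨X ^ n - C (m : ℤ), monic_X_pow_sub_C _ hn, by simp [hbm]⟩,
    fun _ hz => (norm_eq_of_mem_roots_minpoly hb hn hbm hz).le⟩

theorem condC_dense (x : ℝ) (hx : 1 ≤ x) (ε : ℝ) (hε : 0 < ε) :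
    ∃ b : ℝ, |b - x| < ε ∧ CondC b := by
  obtain ⟨b, hb0, ⟨hxb, hbx⟩, n, hn, m, hbm⟩ := exists_pow_eq_natCast_mem_Ico hx hε
  exact ⟨b, abs_sub_lt_iff.mpr ⟨by linarith, by linarith⟩, condC_of_pow_eq_natCast hb0 hn hbm⟩
end

section
/- Let b > 1 be a real algebraic integer whose minimal polynomial p over ℚ has no complex root of modulus greater than b. Let m be the number of complex roots of p of modulus exactly b, and let ω ∈ ℂ be a primitive m-th root of unity. Then the set of complex roots of p is closed under multiplication by ω: if z is a root of p (viewed over ℂ), then ωz is also a root of p. -/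
/-!
Work in the field `E` of algebraic numbers inside `ℂ`, where every root `β` of `p` is `σ b` for
some `ℚ`-embedding `σ : E → E`. Let `M` be the set of roots of modulus `b`. For `x ∈ M` the root
`x̄ = b² / x` lies in `M` as well, and `σ x * σ (b² / x) = (σ b)²`; as no root has modulus above
`b`, if `|σ b| = b` then `σ` maps `M` into, hence onto, itself and fixes the product `c` of `M`.
Since `x ↦ b² / x` also permutes `M`, `c² = b^(2m)`, so `c = ±b^m` and applying `σ` with
`σ b = β ∈ M` gives `β^m = b^m`. By counting, `M` is the set of all `m`-th roots of `b^m`, so it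
contains every `ωⁱ b`. Finally, for a root `z = τ b`, `τ ω` is a primitive `m`-th root of unity,
so `ω = τ (ωⁱ)` for some `i`, and `ω z = τ (ωⁱ b)` is a root.
-/

open Polynomial Finset ComplexConjugate

theorem Finset.prod_comp_eq_of_injOn_of_mapsTo {ι M : Type*} [CommMonoid M] {s : Finset ι}
    {g : ι → ι} (hm : Set.MapsTo g s s) (hi : Set.InjOn g s) (f : ι → M) :
    ∏ x ∈ s, f (g x) = ∏ x ∈ s, f x :=
  prod_nbij g hm hi ((s.finite_toSet.injOn_iff_bijOn_of_mapsTo hm).mp hi).surjOn fun _ _ ↦ rfl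

theorem map_pow_eq_pow_of_sq_eq_sq {F : Type*} [CommRing F] [IsDomain F] (σ : F →+* F)
    {a c : F} {m : ℕ} (hc : c ^ 2 = (a ^ m) ^ 2) (hσ : σ c = c) : σ a ^ m = a ^ m := by
  rcases sq_eq_sq_iff_eq_or_eq_neg.mp hc with rfl | rfl
  · simpa using hσ
  · simpa using hσ

theorem IsAlgClosed.exists_algHom_apply_eq {F K : Type*} [Field F] [Field K] [Algebra F K]
    [IsAlgClosed K] [Algebra.IsAlgebraic F K] {x y : K} (hy : aeval y (minpoly F x) = 0) :
    ∃ σ : K →ₐ[F] K, σ x = y :=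
  IntermediateField.exists_algHom_of_splits_of_aeval
    (fun s ↦ ⟨Algebra.IsIntegral.isIntegral s, IsAlgClosed.splits _⟩) hy

theorem Complex.conj_eq_sq_div_of_norm_eq {z : ℂ} {r : ℝ} (hz : ‖z‖ = r) :
    conj z = (r : ℂ) ^ 2 / z := by
  rcases eq_or_ne z 0 with rfl | hz0
  · simp [← hz]
  · rw [eq_div_iff hz0, mul_comm, Complex.mul_conj, Complex.normSq_eq_norm_sq, hz]
    push_cast
    ring

theorem Complex.aeval_conj_eq_zero_s15 {p : ℚ[X]} {z : ℂ} (hz : aeval z p = 0) :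
    aeval (conj z) p = 0 := by
  simpa [hz] using aeval_algHom_apply (Complex.conjAe.restrictScalars ℚ).toAlgHom z p

noncomputable def rootsOfNorm (p : ℚ[X]) (E : IntermediateField ℚ ℂ) (r : ℝ) : Finset E :=
  (p.aroots E).toFinset.filter fun x ↦ ‖(x : ℂ)‖ = r

section rootsOfNorm

variable {E : IntermediateField ℚ ℂ} {p : ℚ[X]} {r : ℝ}

theorem aeval_coe_eq_zero_iff {x : E} : aeval (x : ℂ) p = 0 ↔ aeval x p = 0 :=
  aeval_algebraMap_eq_zero_iff ℂ x p

theorem mem_rootsOfNorm (hp : p ≠ 0) {x : E} :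
    x ∈ rootsOfNorm p E r ↔ aeval x p = 0 ∧ ‖(x : ℂ)‖ = r := by
  simp [rootsOfNorm, hp]

theorem card_rootsOfNorm [IsAlgClosed E] (hp : p.Separable) :
    #(rootsOfNorm p E r) = Multiset.card ((p.aroots ℂ).filter fun z ↦ ‖z‖ = r) := by
  rw [← (IsAlgClosed.splits (p.map (algebraMap ℚ E))).map_aroots_algebraMap, Multiset.filter_map,
    Multiset.card_map, rootsOfNorm, ← Multiset.toFinset_filter,
    Multiset.toFinset_card_of_nodup ((nodup_roots hp.map).filter _)]
  rfl

variable {a : E}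

theorem sq_div_mem_rootsOfNorm (hp : p ≠ 0) (ha : (a : ℂ) = r) {x : E}
    (hx : x ∈ rootsOfNorm p E r) : a ^ 2 / x ∈ rootsOfNorm p E r := by
  rw [mem_rootsOfNorm hp] at hx ⊢
  have hconj : ((a ^ 2 / x : E) : ℂ) = conj (x : ℂ) := by
    rw [Complex.conj_eq_sq_div_of_norm_eq hx.2, ← ha]
    push_cast
    rfl
  rw [← aeval_coe_eq_zero_iff, hconj, Complex.norm_conj]
  exact ⟨Complex.aeval_conj_eq_zero_s15 (aeval_coe_eq_zero_iff.mpr hx.1), hx.2⟩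

theorem prod_rootsOfNorm_sq (hp : p ≠ 0) (hr : r ≠ 0) (ha : (a : ℂ) = r) :
    (∏ x ∈ rootsOfNorm p E r, x) ^ 2 = (a ^ #(rootsOfNorm p E r)) ^ 2 := by
  have ha0 : a ≠ 0 := by rintro rfl; simp [eq_comm, hr] at ha
  have hne : ∀ x ∈ rootsOfNorm p E r, x ≠ 0 := by
    rintro x hx rfl
    simp [mem_rootsOfNorm hp, eq_comm, hr] at hx
  have hinv : ∏ x ∈ rootsOfNorm p E r, a ^ 2 / x = ∏ x ∈ rootsOfNorm p E r, x :=
    prod_comp_eq_of_injOn_of_mapsTo (fun x hx ↦ sq_div_mem_rootsOfNorm hp ha hx)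
      (fun x _ y _ h ↦ by simpa [div_eq_mul_inv, ha0] using h) id
  rw [prod_div_distrib, prod_const, div_eq_iff (prod_ne_zero_iff.mpr hne)] at hinv
  rw [sq, ← hinv]
  ring

variable (hbound : ∀ x : E, aeval x p = 0 → ‖(x : ℂ)‖ ≤ r)
include hbound

theorem map_mem_rootsOfNorm (hp : p ≠ 0) (hr : r ≠ 0) (ha : (a : ℂ) = r) {σ : E →ₐ[ℚ] E}
    (hσ : ‖(σ a : ℂ)‖ = r) {x : E} (hx : x ∈ rootsOfNorm p E r) : σ x ∈ rootsOfNorm p E r := by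
  have hy := (mem_rootsOfNorm hp).mp (sq_div_mem_rootsOfNorm hp ha hx)
  rw [mem_rootsOfNorm hp] at hx ⊢
  have hx0 : x ≠ 0 := by rintro rfl; simp [eq_comm, hr] at hx
  have hmap : ∀ y : E, aeval y p = 0 → aeval (σ y) p = 0 := fun y hy ↦ by
    rw [aeval_algHom_apply, hy, map_zero]
  refine ⟨hmap x hx.1, ?_⟩
  have hprod : ‖(σ x : ℂ)‖ * ‖(σ (a ^ 2 / x) : ℂ)‖ = r ^ 2 := by
    rw [← norm_mul, ← IntermediateField.coe_mul, ← map_mul, mul_div_cancel₀ _ hx0, map_pow,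
      IntermediateField.coe_pow, norm_pow, hσ]
  have h1 := hbound _ (hmap x hx.1)
  have h2 := hbound _ (hmap _ hy.1)
  nlinarith [norm_nonneg (σ x : ℂ), norm_nonneg (σ (a ^ 2 / x) : ℂ)]

theorem map_prod_rootsOfNorm (hp : p ≠ 0) (hr : r ≠ 0) (ha : (a : ℂ) = r) {σ : E →ₐ[ℚ] E}
    (hσ : ‖(σ a : ℂ)‖ = r) : σ (∏ x ∈ rootsOfNorm p E r, x) = ∏ x ∈ rootsOfNorm p E r, x := by
  rw [map_prod]
  exact prod_comp_eq_of_injOn_of_mapsTo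
    (fun x hx ↦ map_mem_rootsOfNorm hbound hp hr ha hσ hx) σ.injective.injOn id

end rootsOfNorm

section minpoly

variable {E : IntermediateField ℚ ℂ} [Algebra.IsAlgebraic ℚ E] {r : ℝ} {a : E}

theorem self_mem_rootsOfNorm (hr : 0 ≤ r) (ha : (a : ℂ) = r) :
    a ∈ rootsOfNorm (minpoly ℚ a) E r := by
  rw [mem_rootsOfNorm (minpoly.ne_zero (Algebra.IsIntegral.isIntegral a)), ha]
  exact ⟨minpoly.aeval ℚ a, by simp [abs_of_nonneg hr]⟩

variable [IsAlgClosed E] (hbound : ∀ x : E, aeval x (minpoly ℚ a) = 0 → ‖(x : ℂ)‖ ≤ r)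
include hbound

theorem pow_card_eq_of_mem_rootsOfNorm (hr : r ≠ 0) (ha : (a : ℂ) = r) {β : E}
    (hβ : β ∈ rootsOfNorm (minpoly ℚ a) E r) :
    β ^ #(rootsOfNorm (minpoly ℚ a) E r) = a ^ #(rootsOfNorm (minpoly ℚ a) E r) := by
  have hp := minpoly.ne_zero (Algebra.IsIntegral.isIntegral (R := ℚ) a)
  obtain ⟨hβroot, hβnorm⟩ := (mem_rootsOfNorm hp).mp hβ
  obtain ⟨σ, rfl⟩ := IsAlgClosed.exists_algHom_apply_eq hβroot
  exact map_pow_eq_pow_of_sq_eq_sq (σ : E →+* E) (prod_rootsOfNorm_sq hp hr ha)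
    (map_prod_rootsOfNorm hbound hp hr ha hβnorm)

theorem rootsOfNorm_eq_nthRootsFinset (hr : 0 < r) (ha : (a : ℂ) = r) :
    rootsOfNorm (minpoly ℚ a) E r =
      nthRootsFinset #(rootsOfNorm (minpoly ℚ a) E r) (a ^ #(rootsOfNorm (minpoly ℚ a) E r)) := by
  have hM := card_pos.mpr ⟨a, self_mem_rootsOfNorm hr.le ha⟩
  refine eq_of_subset_of_card_le (fun β hβ ↦ ?_) ?_
  · exact (mem_nthRootsFinset hM _).mpr (pow_card_eq_of_mem_rootsOfNorm hbound hr.ne' ha hβ)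
  · rw [nthRootsFinset_def]
    exact (Multiset.toFinset_card_le _).trans (card_nthRoots _ _)

theorem aeval_mul_eq_zero_of_isPrimitiveRoot (hr : 0 < r) (ha : (a : ℂ) = r) {ω z : E}
    (hω : IsPrimitiveRoot ω #(rootsOfNorm (minpoly ℚ a) E r))
    (hz : aeval z (minpoly ℚ a) = 0) : aeval (ω * z) (minpoly ℚ a) = 0 := by
  set M := rootsOfNorm (minpoly ℚ a) E r
  have hM : NeZero #M := ⟨(card_pos.mpr ⟨a, self_mem_rootsOfNorm hr.le ha⟩).ne'⟩
  obtain ⟨τ, rfl⟩ := IsAlgClosed.exists_algHom_apply_eq hz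
  obtain ⟨i, -, hi⟩ :=
    (hω.map_of_injective (f := τ) τ.injective).eq_pow_of_pow_eq_one hω.pow_eq_one
  have hMeq : M = nthRootsFinset #M (a ^ #M) := rootsOfNorm_eq_nthRootsFinset hbound hr ha
  have hmem : ω ^ i * a ∈ M := by
    rw [hMeq, mem_nthRootsFinset hM.pos, mul_pow, ← pow_mul, mul_comm i, pow_mul,
      hω.pow_eq_one, one_pow, one_mul]
  have hroot := ((mem_rootsOfNorm (minpoly.ne_zero (Algebra.IsIntegral.isIntegral a))).mp hmem).1
  rw [← hi, ← map_pow, ← map_mul, aeval_algHom_apply, hroot, map_zero]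

end minpoly

theorem roots_closed_under_primitive_root_mul
    (b : ℝ) (hb : 1 < b) (hint : IsIntegral ℤ b)
    (hroots : ∀ z ∈ ((minpoly ℚ b).map (algebraMap ℚ ℂ)).roots, ‖z‖ ≤ b)
    (m : ℕ)
    (hm : m = Multiset.card
      (((minpoly ℚ b).map (algebraMap ℚ ℂ)).roots.filter (fun z => ‖z‖ = b)))
    (ω : ℂ) (hω : IsPrimitiveRoot ω m) :
    ∀ z ∈ ((minpoly ℚ b).map (algebraMap ℚ ℂ)).roots,
      ω * z ∈ ((minpoly ℚ b).map (algebraMap ℚ ℂ)).roots := by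
  intro z hz
  let E := algebraicClosure ℚ ℂ
  have : IsAlgClosed E := (algebraicClosure.isAlgClosure ℚ ℂ).isAlgClosed
  have : Algebra.IsAlgebraic ℚ E := algebraicClosure.isAlgebraic ℚ ℂ
  have hbQ : IsIntegral ℚ b := hint.tower_top
  have hp : minpoly ℚ b ≠ 0 := minpoly.ne_zero hbQ
  let a : E := ⟨b, hbQ.algebraMap⟩
  have hmin : minpoly ℚ a = minpoly ℚ b :=
    (minpoly.algebraMap_eq E.val.injective a).symm.trans
      (minpoly.algebraMap_eq Complex.ofReal_injective b)
  have hbound : ∀ x : E, aeval x (minpoly ℚ a) = 0 → ‖(x : ℂ)‖ ≤ b := fun x hx ↦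
    hroots _ (mem_aroots.mpr ⟨hp, aeval_coe_eq_zero_iff.mpr (hmin ▸ hx)⟩)
  have hcard : #(rootsOfNorm (minpoly ℚ a) E b) = m := by
    rw [hm, hmin, card_rootsOfNorm (minpoly.irreducible hbQ).separable]
  have hm0 : 0 < m := hcard ▸ card_pos.mpr ⟨a, self_mem_rootsOfNorm (zero_le_one.trans hb.le) rfl⟩
  have hz' := (mem_aroots.mp hz).2
  have hzE : z ∈ E := mem_algebraicClosure_iff.mpr ⟨_, hp, hz'⟩
  have hωE : ω ∈ E := (hω.isIntegral hm0).tower_top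
  have hωprim : IsPrimitiveRoot (⟨ω, hωE⟩ : E) #(rootsOfNorm (minpoly ℚ a) E b) :=
    hcard ▸ hω.of_map_of_injective (f := E.val) E.val.injective
  have hroot := aeval_mul_eq_zero_of_isPrimitiveRoot hbound (zero_lt_one.trans hb) rfl hωprim
    (z := ⟨z, hzE⟩) (hmin ▸ aeval_coe_eq_zero_iff.mp hz')
  exact mem_aroots.mpr ⟨hp, hmin ▸ aeval_coe_eq_zero_iff.mpr hroot⟩
end

section
/- Let b > 0 be a real number algebraic over ℚ such that no complex root of its minimal polynomial p over ℚ has modulus greater than b, let L ⊆ ℂ be the splitting field of p over ℚ, and let φ be a ℚ-algebra automorphism of L with |φ(b)| = b. Then φ permutes the set of roots of p of modulus exactly b: for every root β of p with |β| = b, one has |φ(β)| = b. -/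
/-!
If `|β| = b` then `β · conj β = b²`, and `conj β` is again a root of the minimal polynomial.
Applying `φ` gives `φ(β) · φ(conj β) = φ(b)²`, of modulus `b²`; both factors are roots, hence of
modulus at most `b`, so both have modulus exactly `b`.
-/

open Polynomial

theorem IntermediateField.mem_rootSet_of_coe_mem_rootSet {K E : Type*} [Field K] [Field E]
    [Algebra K E] {L : IntermediateField K E} {p : K[X]} {x : L}
    (hx : (x : E) ∈ p.rootSet E) : x ∈ p.rootSet L := by
  rw [mem_rootSet] at hx ⊢
  refine ⟨hx.1, (algebraMap L E).injective ?_⟩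
  rw [map_zero, ← aeval_algebraMap_apply]
  exact hx.2

theorem IntermediateField.coe_algHom_mem_rootSet {K E : Type*} [Field K] [Field E]
    [Algebra K E] {L : IntermediateField K E} (φ : L →ₐ[K] L) {p : K[X]} {x : L}
    (hx : (x : E) ∈ p.rootSet E) : (φ x : E) ∈ p.rootSet E :=
  rootSet_mapsTo (L.val.comp φ) (mem_rootSet_of_coe_mem_rootSet hx)

theorem Complex.conj_mem_rootSet {K : Type*} [Field K] [Algebra K ℝ] {p : K[X]} {z : ℂ}
    (hz : z ∈ p.rootSet ℂ) : starRingEnd ℂ z ∈ p.rootSet ℂ :=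
  rootSet_mapsTo ((Complex.conjAe.restrictScalars K).toAlgHom) hz

theorem eq_of_mul_eq_sq_of_le {x y b : ℝ} (hx : 0 ≤ x) (hxb : x ≤ b) (hyb : y ≤ b)
    (hxy : x * y = b ^ 2) : x = b := by
  nlinarith

theorem galois_automorphism_permutes_max_modulus_roots_general
    (b : ℝ)
    (hroots : ∀ z ∈ (minpoly ℚ b).rootSet ℂ, ‖z‖ ≤ b)
    (L : IntermediateField ℚ ℂ)
    (hL : L = IntermediateField.adjoin ℚ ((minpoly ℚ b).rootSet ℂ))
    (φ : L ≃ₐ[ℚ] L)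
    (hbL : ((b : ℂ)) ∈ L)
    (hφb : ‖((φ ⟨(b : ℂ), hbL⟩ : L) : ℂ)‖ = b) :
    ∀ (β : ℂ) (hβ : β ∈ L), β ∈ (minpoly ℚ b).rootSet ℂ → ‖β‖ = b →
      ‖((φ ⟨β, hβ⟩ : L) : ℂ)‖ = b := by
  intro β hβ hβroot hβnorm
  have hconj_root := Complex.conj_mem_rootSet hβroot
  have hconjL : starRingEnd ℂ β ∈ L := by
    rw [hL]
    exact IntermediateField.subset_adjoin ℚ _ hconj_root
  have hmul : (⟨β, hβ⟩ : L) * ⟨starRingEnd ℂ β, hconjL⟩ = ⟨(b : ℂ), hbL⟩ ^ 2 := by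
    ext
    simp only [IntermediateField.coe_mul, IntermediateField.coe_pow, Complex.mul_conj,
      Complex.normSq_eq_norm_sq, hβnorm, Complex.ofReal_pow]
  have hprod : ‖((φ ⟨β, hβ⟩ : L) : ℂ)‖ * ‖((φ ⟨starRingEnd ℂ β, hconjL⟩ : L) : ℂ)‖ = b ^ 2 := by
    rw [← norm_mul, ← IntermediateField.coe_mul, ← map_mul, hmul, map_pow,
      IntermediateField.coe_pow, norm_pow, hφb]
  have hφβ_root := IntermediateField.coe_algHom_mem_rootSet φ.toAlgHom (x := ⟨β, hβ⟩) hβroot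
  have hφconj_root :=
    IntermediateField.coe_algHom_mem_rootSet φ.toAlgHom (x := ⟨_, hconjL⟩) hconj_root
  exact eq_of_mul_eq_sq_of_le (norm_nonneg _) (hroots _ hφβ_root) (hroots _ hφconj_root) hprod

theorem galois_automorphism_permutes_max_modulus_roots
    (b : ℝ) (hb : 0 < b) (halg : IsAlgebraic ℚ b)
    (hroots : ∀ z ∈ (minpoly ℚ b).rootSet ℂ, ‖z‖ ≤ b)
    (L : IntermediateField ℚ ℂ)
    (hL : L = IntermediateField.adjoin ℚ ((minpoly ℚ b).rootSet ℂ))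
    (φ : L ≃ₐ[ℚ] L)
    (hbL : ((b : ℂ)) ∈ L)
    (hφb : ‖((φ ⟨(b : ℂ), hbL⟩ : L) : ℂ)‖ = b) :
    ∀ (β : ℂ) (hβ : β ∈ L), β ∈ (minpoly ℚ b).rootSet ℂ → ‖β‖ = b →
      ‖((φ ⟨β, hβ⟩ : L) : ℂ)‖ = b :=
  galois_automorphism_permutes_max_modulus_roots_general b hroots L hL φ hbL hφb
end

section
/- Define g : ℕ → ℝ recursively by g(0) = 1 and g(n+1) = Σ_{s=0}^n (s+1)·g(n−s) for n ≥ 0. Then there exist real constants c₁, c₂ > 0 such that for every n ∈ ℕ, c₁·((3+√5)/2)^n ≤ g(n) ≤ c₂·((3+√5)/2)^n. -/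
open Finset

theorem growth_of_recursive_sequence
    (g : ℕ → ℝ) (hg0 : g 0 = 1)
    (hg : ∀ n : ℕ, g (n + 1) = ∑ s ∈ Finset.range (n + 1), ((s : ℝ) + 1) * g (n - s)) :
    ∃ c₁ c₂ : ℝ, 0 < c₁ ∧ 0 < c₂ ∧
      ∀ n : ℕ, c₁ * ((3 + Real.sqrt 5) / 2) ^ n ≤ g n ∧
        g n ≤ c₂ * ((3 + Real.sqrt 5) / 2) ^ n := by
  have hs2 : Real.sqrt 5 ^ 2 = 5 := Real.sq_sqrt (by norm_num)
  have hsnn : (0:ℝ) ≤ Real.sqrt 5 := Real.sqrt_nonneg 5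
  have hs_lb : (2:ℝ) < Real.sqrt 5 := by nlinarith
  have hs_ub : Real.sqrt 5 < 3 := by nlinarith
  set s : ℝ := Real.sqrt 5 with hs
  set P : ℝ := (3 + s) / 2 with hPdef
  set Q : ℝ := (3 - s) / 2 with hQdef
  have hPQ : P * Q = 1 := by rw [hPdef, hQdef]; nlinarith
  have hsum : P + Q = 3 := by rw [hPdef, hQdef]; ring
  have hP1 : (1:ℝ) < P := by rw [hPdef]; nlinarith
  have hQpos : (0:ℝ) < Q := by rw [hQdef]; nlinarith
  have hQ1 : Q ≤ 1 := by rw [hQdef]; nlinarith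
  have hQP1 : Q ≤ P - 1 := by rw [hPdef, hQdef]; nlinarith
  have hg1 : g 1 = 1 := by
    have := hg 0
    simpa [hg0] using this
  -- reindexed recurrence
  have hrev : ∀ n : ℕ, g (n + 1) = ∑ k ∈ Finset.range (n + 1), ((n:ℝ) - k + 1) * g k := by
    intro n
    rw [hg n, ← Finset.sum_range_reflect (fun k => ((n:ℝ) - k + 1) * g k) (n + 1)]
    apply Finset.sum_congr rfl
    intro j hj
    have hj' : j ≤ n := Nat.lt_succ_iff.mp (Finset.mem_range.mp hj)
    have h1 : n + 1 - 1 - j = n - j := by omega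
    rw [h1, Nat.cast_sub hj']
    ring
  have hrec2 : ∀ n : ℕ, g (n + 2) = 2 * g (n + 1) + ∑ k ∈ Finset.range (n + 1), g k := by
    intro n
    have A := hrev (n + 1)
    have B := hrev n
    rw [Finset.sum_range_succ] at A
    have C : ∑ k ∈ Finset.range (n + 1), (((n:ℝ) + 1) - k + 1) * g k
        = (∑ k ∈ Finset.range (n + 1), ((n:ℝ) - k + 1) * g k)
          + ∑ k ∈ Finset.range (n + 1), g k := by
      rw [← Finset.sum_add_distrib]
      apply Finset.sum_congr rfl
      intro k _
      ring
    push_cast at A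
    rw [C] at A
    rw [A, ← B]
    ring
  have hrec3 : ∀ n : ℕ, g (n + 3) = 3 * g (n + 2) - g (n + 1) := by
    intro n
    have A := hrec2 (n + 1)
    have B := hrec2 n
    rw [Finset.sum_range_succ] at A
    have : (n + 1) + 2 = n + 3 := by omega
    rw [this] at A
    linarith
  have hg2 : g 2 = 3 := by
    have := hrec2 0
    simp [hg0, hg1] at this
    linarith
  -- key exact step relation
  have hkey : ∀ n : ℕ, g (n + 2) = P * g (n + 1) + Q ^ (n + 1) := by
    intro n
    induction n with
    | zero =>
      rw [hg1, hg2, pow_one]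
      linarith
    | succ n ih =>
      have h3 : g (n + 3) = 3 * g (n + 2) - g (n + 1) := hrec3 n
      have : n + 1 + 2 = n + 3 := by omega
      rw [this, h3, ih]
      have hQQ : Q ^ (n + 1 + 1) = Q * Q ^ (n + 1) := by ring
      rw [hQQ]
      linear_combination g (n + 1) * hPQ - (g (n + 1) * P + Q ^ (n + 1)) * hsum
  -- lower bound
  have hlow : ∀ n : ℕ, P ^ n ≤ g (n + 1) := by
    intro n
    induction n with
    | zero => simp [hg1]
    | succ n ih =>
      have h := hkey n
      have hQp : (0:ℝ) < Q ^ (n + 1) := pow_pos hQpos _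
      have : P * P ^ n ≤ P * g (n + 1) :=
        mul_le_mul_of_nonneg_left ih (by linarith)
      calc P ^ (n + 1) = P * P ^ n := by ring
        _ ≤ P * g (n + 1) := this
        _ ≤ P * g (n + 1) + Q ^ (n + 1) := by linarith
        _ = g (n + 2) := h.symm
  -- upper bound
  have hup : ∀ n : ℕ, g (n + 1) ≤ P ^ (n + 1) - Q ^ (n + 1) := by
    intro n
    induction n with
    | zero =>
      rw [hg1, pow_one, pow_one]
      rw [hPdef, hQdef]; nlinarith
    | succ n ih =>
      have h := hkey n
      have hQp : (0:ℝ) < Q ^ (n + 1) := pow_pos hQpos _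
      have h1 : P * g (n + 1) ≤ P * (P ^ (n + 1) - Q ^ (n + 1)) :=
        mul_le_mul_of_nonneg_left ih (by linarith)
      have h2 : Q * Q ^ (n + 1) ≤ (P - 1) * Q ^ (n + 1) :=
        mul_le_mul_of_nonneg_right hQP1 (le_of_lt hQp)
      calc g (n + 1 + 1) = P * g (n + 1) + Q ^ (n + 1) := h
        _ ≤ P * (P ^ (n + 1) - Q ^ (n + 1)) + Q ^ (n + 1) := by linarith
        _ = P ^ (n + 2) - (P - 1) * Q ^ (n + 1) := by ring
        _ ≤ P ^ (n + 2) - Q * Q ^ (n + 1) := by linarith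
        _ = P ^ (n + 1 + 1) - Q ^ (n + 1 + 1) := by ring
  refine ⟨Q, 1, hQpos, one_pos, ?_⟩
  intro n
  match n with
  | 0 =>
    constructor
    · simpa [hg0] using hQ1
    · simp [hg0]
  | (m + 1) =>
    constructor
    · have : Q * P ^ (m + 1) = P ^ m := by
        have : Q * P ^ (m + 1) = (P * Q) * P ^ m := by ring
        rw [this, hPQ, one_mul]
      rw [this]
      exact hlow m
    · have hQp : (0:ℝ) ≤ Q ^ (m + 1) := le_of_lt (pow_pos hQpos _)
      have := hup m
      linarith [hup m]
end

section
/- For each natural number s, let r_s be the unique positive real root of the polynomial p_s(x) = x^{s+1} − Σ_{i=0}^s (i+1)·x^{s−i}. Then the sequence (r_s) is monotonically increasing and converges to (3+√5)/2. -/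
/-!
Dividing `p_s(x) = 0` by `x ^ (s + 1)` turns it into `W s x = 1`, where
`W s x = ∑_{i ≤ s} (i + 1) x⁻¹ ^ (i + 1)` (`weightedInvPowSum`) is strictly decreasing in `x > 0` and strictly
increasing in `s`; hence `r_s < r_{s+1}`. For `x > 1` the sums `W s x` are the partial sums of
`∑ (n + 1) x⁻¹ ^ (n + 1) = x / (x - 1) ^ 2`, which equals `1` at `c = (3 + √5) / 2` (the larger
root of `(x - 1)² = x`) and exceeds `1` on `(1, c)`. So `W s c < 1` forces `r_s < c`, while for
`1 < x < c` eventually `W s x > 1`, forcing `x < r_s`.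
-/

open Finset Filter

noncomputable def weightedInvPowSum (s : ℕ) (x : ℝ) : ℝ :=
  ∑ i ∈ range (s + 1), ((i : ℝ) + 1) * x⁻¹ ^ (i + 1)

lemma weightedInvPowSum_eq_one_of_root {s : ℕ} {x : ℝ} (hx : 0 < x)
    (h : x ^ (s + 1) = ∑ i ∈ range (s + 1), ((i : ℝ) + 1) * x ^ (s - i)) :
    weightedInvPowSum s x = 1 := by
  have hterm : ∀ i ∈ range (s + 1),
      ((i : ℝ) + 1) * x ^ (s - i) = x ^ (s + 1) * (((i : ℝ) + 1) * x⁻¹ ^ (i + 1)) := by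
    intro i hi
    have hsplit : x ^ (s + 1) = x ^ (s - i) * x ^ (i + 1) := by
      rw [← pow_add]; congr 1; have := mem_range.mp hi; omega
    rw [hsplit, inv_pow]
    field_simp
  rw [sum_congr rfl hterm, ← mul_sum] at h
  exact (mul_eq_left₀ (pow_ne_zero _ hx.ne')).mp h.symm

lemma weightedInvPowSum_strictAntiOn (s : ℕ) :
    StrictAntiOn (weightedInvPowSum s) (Set.Ioi 0) := by
  intro x hx y hy hxy
  apply sum_lt_sum_of_nonempty nonempty_range_add_one
  intro i _
  have hy0 : 0 < y := hy
  gcongr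

lemma weightedInvPowSum_lt_succ (s : ℕ) {x : ℝ} (hx : 0 < x) :
    weightedInvPowSum s x < weightedInvPowSum (s + 1) x := by
  rw [weightedInvPowSum, weightedInvPowSum, sum_range_succ _ (s + 1)]
  exact lt_add_of_pos_right _ (by positivity)

lemma hasSum_weightedInvPow {x : ℝ} (hx : 1 < x) :
    HasSum (fun n : ℕ => ((n : ℝ) + 1) * x⁻¹ ^ (n + 1)) (x / (x - 1) ^ 2) := by
  have hnorm : ‖x⁻¹‖ < 1 := by
    rw [Real.norm_of_nonneg (inv_nonneg.mpr (one_pos.trans hx).le)]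
    exact inv_lt_one_of_one_lt₀ hx
  have hgeom := (hasSum_nat_add_iff (f := fun n : ℕ => (n : ℝ) * x⁻¹ ^ n) 1).mpr
    (by simpa using hasSum_coe_mul_geometric_of_norm_lt_one hnorm)
  have hval : x⁻¹ / (1 - x⁻¹) ^ 2 = x / (x - 1) ^ 2 := by
    have : x - 1 ≠ 0 := sub_ne_zero.mpr hx.ne'
    field_simp
  rw [← hval]
  simpa only [Nat.cast_add_one] using hgeom

lemma weightedInvPowSum_lt_div_sub_one_sq (s : ℕ) {x : ℝ} (hx : 1 < x) :
    weightedInvPowSum s x < x / (x - 1) ^ 2 :=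
  (weightedInvPowSum_lt_succ s (one_pos.trans hx)).trans_le <|
    sum_le_hasSum _ (fun _ _ => by positivity) (hasSum_weightedInvPow hx)

lemma eventually_one_lt_weightedInvPowSum {x : ℝ} (hx : 1 < x) (hlt : 1 < x / (x - 1) ^ 2) :
    ∀ᶠ s in atTop, 1 < weightedInvPowSum s x := by
  have hpartial := (tendsto_add_atTop_iff_nat 1).mpr (hasSum_weightedInvPow hx).tendsto_sum_nat
  exact hpartial.eventually_const_lt hlt

lemma div_sub_one_sq_three_add_sqrt_five : (3 + √5) / 2 / ((3 + √5) / 2 - 1) ^ 2 = 1 := by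
  have h5 : √5 ^ 2 = 5 := Real.sq_sqrt (by norm_num)
  have hpos : 0 < (3 + √5) / 2 - 1 := by linarith [Real.sqrt_nonneg 5]
  rw [div_eq_one_iff_eq (pow_pos hpos 2).ne']
  linear_combination -h5 / 4

lemma one_lt_div_sub_one_sq {x : ℝ} (h1 : 1 < x) (h2 : x < (3 + √5) / 2) :
    1 < x / (x - 1) ^ 2 := by
  have h5 : √5 ^ 2 = 5 := Real.sq_sqrt (by norm_num)
  have hs : 1 < √5 := (Real.lt_sqrt zero_le_one).mpr (by norm_num)
  rw [one_lt_div (by nlinarith)]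
  nlinarith [mul_pos (sub_pos.mpr h2) (show 0 < x - (3 - √5) / 2 by linarith)]

theorem positive_roots_converge_general
    (r : ℕ → ℝ)
    (hroot : ∀ s : ℕ, 0 < r s ∧
      (r s) ^ (s + 1) = ∑ i ∈ Finset.range (s + 1), ((i : ℝ) + 1) * (r s) ^ (s - i)) :
    Monotone r ∧
      Filter.Tendsto r Filter.atTop (nhds ((3 + Real.sqrt 5) / 2)) := by
  set c := (3 + √5) / 2 with hc
  have hc2 : 2 < c := by
    have : 1 < √5 := (Real.lt_sqrt zero_le_one).mpr (by norm_num)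
    linarith
  have hW s : weightedInvPowSum s (r s) = 1 :=
    weightedInvPowSum_eq_one_of_root (hroot s).1 (hroot s).2
  have hlt_iff s {x : ℝ} (hx : 0 < x) : weightedInvPowSum s x < 1 ↔ r s < x := by
    rw [← hW s]; exact (weightedInvPowSum_strictAntiOn s).lt_iff_gt hx (hroot s).1
  have hgt_iff s {x : ℝ} (hx : 0 < x) : 1 < weightedInvPowSum s x ↔ x < r s := by
    rw [← hW s]; exact (weightedInvPowSum_strictAntiOn s).lt_iff_gt (hroot s).1 hx
  have hmono : StrictMono r := strictMono_nat_of_lt_succ fun s =>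
    (hgt_iff (s + 1) (hroot s).1).mp (hW s ▸ weightedInvPowSum_lt_succ s (hroot s).1)
  have hub s : r s < c := (hlt_iff s (by linarith)).mp <|
    div_sub_one_sq_three_add_sqrt_five ▸ weightedInvPowSum_lt_div_sub_one_sq s (by linarith)
  refine ⟨hmono.monotone,
    tendsto_order.2 ⟨fun a ha => ?_, fun b hb => .of_forall fun s => (hub s).trans hb⟩⟩
  have hx1 : 1 < max a 2 := by simp
  have hxc : max a 2 < c := max_lt ha hc2
  filter_upwards [eventually_one_lt_weightedInvPowSum hx1 (one_lt_div_sub_one_sq hx1 hxc)] with s hs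
  exact (le_max_left a 2).trans_lt ((hgt_iff s (by linarith)).mp hs)

theorem positive_roots_converge
    (r : ℕ → ℝ)
    (hroot : ∀ s : ℕ, 0 < r s ∧
      (r s) ^ (s + 1) = ∑ i ∈ Finset.range (s + 1), ((i : ℝ) + 1) * (r s) ^ (s - i))
    (huniq : ∀ s : ℕ, ∀ x : ℝ, 0 < x →
      x ^ (s + 1) = ∑ i ∈ Finset.range (s + 1), ((i : ℝ) + 1) * x ^ (s - i) → x = r s) :
    Monotone r ∧
      Filter.Tendsto r Filter.atTop (nhds ((3 + Real.sqrt 5) / 2)) :=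
  positive_roots_converge_general r hroot
end
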